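/- arXiv:1109.1800 — 9 statements merged into one kernel-verified Lean document; each statement's English description precedes it below -/
import Mathlib

section
/- Let f : [0,∞) → V be a bounded measurable function into a separable Banach space V such that for almost every t ∈ [0,1] the limit A_t = lim_{N→∞} (1/N) ∑_{n=0}^{N-1} f(t+n) exists. Then lim_{b→∞} (1/b) ∫_0^b f(x) dx exists and equals ∫_0^1 A_t dt. -/
/-!
Integrating the Cesàro averages over `t ∈ [0,1]` and unfolding the shifts gives
`∫₀¹ N⁻¹ ∑_{n<N} f (t + n) dt = N⁻¹ ∫₀ᴺ f`, so dominated convergence (everything is bounded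
by `M`) yields the claim along integer times `b = N`. For real `b`, the averages over `[0,b]`
and `[0,⌊b⌋]` differ by `O(M / b)`.
-/

open MeasureTheory Filter Topology

section

variable {E : Type*} [NormedAddCommGroup E]

theorem intervalIntegrable_of_norm_le {f : ℝ → E} (hf : AEStronglyMeasurable f volume) {M : ℝ}
    (hbd : ∀ x, ‖f x‖ ≤ M) (a b : ℝ) : IntervalIntegrable f volume a b :=
  intervalIntegrable_iff.2 <|
    Measure.integrableOn_of_bounded measure_Ioc_lt_top.ne hf (ae_of_all _ hbd)

theorem MeasureTheory.AEStronglyMeasurable.comp_add_right {f : ℝ → E}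
    (hf : AEStronglyMeasurable f volume) (c : ℝ) :
    AEStronglyMeasurable (fun t => f (t + c)) volume :=
  hf.comp_measurePreserving (measurePreserving_add_right volume c)

variable [NormedSpace ℝ E]

theorem sum_intervalIntegral_comp_add_nat {f : ℝ → E}
    (hf : ∀ a b, IntervalIntegrable f volume a b) (N : ℕ) :
    ∑ n ∈ Finset.range N, ∫ t in (0:ℝ)..1, f (t + n) = ∫ x in (0:ℝ)..N, f x := by
  have h := intervalIntegral.sum_integral_adjacent_intervals (a := fun k : ℕ => (k:ℝ))
    (μ := volume) (n := N) fun k _ => hf _ _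
  simp only [Nat.cast_add, Nat.cast_one, Nat.cast_zero] at h
  rw [← h]
  refine Finset.sum_congr rfl fun n _ => ?_
  rw [intervalIntegral.integral_comp_add_right, zero_add, add_comm]

theorem norm_inv_smul_sum_range_le {g : ℕ → E} {M : ℝ} (hg : ∀ n, ‖g n‖ ≤ M) (N : ℕ) :
    ‖(N:ℝ)⁻¹ • ∑ n ∈ Finset.range N, g n‖ ≤ M := by
  rcases N.eq_zero_or_pos with rfl | hN
  · simpa using (norm_nonneg _).trans (hg 0)
  calc ‖(N:ℝ)⁻¹ • ∑ n ∈ Finset.range N, g n‖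
      ≤ (N:ℝ)⁻¹ * ∑ n ∈ Finset.range N, ‖g n‖ := by
        rw [norm_smul, Real.norm_of_nonneg (by positivity)]
        gcongr
        exact norm_sum_le _ _
    _ ≤ (N:ℝ)⁻¹ * (N * M) := by
        gcongr
        simpa using Finset.sum_le_sum fun n (_ : n ∈ Finset.range N) => hg n
    _ = M := by field_simp

theorem integral_Icc_inv_smul_sum_comp_add_nat {f : ℝ → E} (hf : AEStronglyMeasurable f volume)
    {M : ℝ} (hbd : ∀ x, ‖f x‖ ≤ M) (N : ℕ) :
    ∫ t in Set.Icc (0:ℝ) 1, (N:ℝ)⁻¹ • ∑ n ∈ Finset.range N, f (t + n)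
      = (N:ℝ)⁻¹ • ∫ x in (0:ℝ)..N, f x := by
  rw [integral_Icc_eq_integral_Ioc, ← intervalIntegral.integral_of_le zero_le_one,
    intervalIntegral.integral_smul, intervalIntegral.integral_finsetSum fun (n : ℕ) _ =>
      intervalIntegrable_of_norm_le (hf.comp_add_right n) (fun _ => hbd _) _ _,
    sum_intervalIntegral_comp_add_nat (intervalIntegrable_of_norm_le hf hbd)]

theorem tendsto_inv_smul_intervalIntegral_nat_of_cesaro {f : ℝ → E}
    (hf : AEStronglyMeasurable f volume) {M : ℝ} (hbd : ∀ x, ‖f x‖ ≤ M) {A : ℝ → E}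
    (hA : ∀ᵐ t ∂(volume.restrict (Set.Icc (0:ℝ) 1)),
      Tendsto (fun N : ℕ => (N : ℝ)⁻¹ • ∑ n ∈ Finset.range N, f (t + n)) atTop (𝓝 (A t))) :
    Tendsto (fun N : ℕ => (N:ℝ)⁻¹ • ∫ x in (0:ℝ)..N, f x) atTop
      (𝓝 (∫ t in Set.Icc (0:ℝ) 1, A t)) := by
  refine (tendsto_integral_of_dominated_convergence (fun _ => M) (fun N => ?_)
    (integrableOn_const measure_Icc_lt_top.ne) (fun N => ae_of_all _ fun t =>
      norm_inv_smul_sum_range_le (fun n => hbd _) N) hA).congr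
    (integral_Icc_inv_smul_sum_comp_add_nat hf hbd)
  exact ((Finset.aestronglyMeasurable_fun_sum _ fun (n : ℕ) _ =>
    hf.comp_add_right n).const_smul _).restrict

theorem tendsto_inv_smul_intervalIntegral_of_nat {f : ℝ → E}
    (hf : ∀ a b, IntervalIntegrable f volume a b) {M : ℝ} (hbd : ∀ x, ‖f x‖ ≤ M) {L : E}
    (hL : Tendsto (fun N : ℕ => (N:ℝ)⁻¹ • ∫ x in (0:ℝ)..N, f x) atTop (𝓝 L)) :
    Tendsto (fun b : ℝ => b⁻¹ • ∫ x in (0:ℝ)..b, f x) atTop (𝓝 L) := by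
  have hfloor := hL.comp (tendsto_nat_floor_atTop (α := ℝ))
  have htail : Tendsto (fun b : ℝ => b⁻¹ • ∫ x in (⌊b⌋₊:ℝ)..b, f x) atTop (𝓝 0) := by
    refine squeeze_zero_norm' ?_ ((tendsto_const_nhds (x := M)).div_atTop tendsto_id)
    filter_upwards [eventually_gt_atTop 0] with b hb
    have hlen : |b - ⌊b⌋₊| ≤ 1 := by
      rw [abs_of_nonneg (sub_nonneg.2 (Nat.floor_le hb.le))]
      linarith [Nat.lt_floor_add_one b]
    rw [norm_smul, Real.norm_of_nonneg (inv_nonneg.2 hb.le), inv_mul_eq_div, id]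
    gcongr
    calc ‖∫ x in (⌊b⌋₊:ℝ)..b, f x‖ ≤ M * |b - ⌊b⌋₊| :=
          intervalIntegral.norm_integral_le_of_norm_le_const fun x _ => hbd x
      _ ≤ M := mul_le_of_le_one_right ((norm_nonneg _).trans (hbd 0)) hlen
  -- `b⁻¹ ∫₀ᵇ f = b⁻¹ ∫_⌊b⌋ᵇ f + (⌊b⌋ / b) • (⌊b⌋⁻¹ ∫₀^⌊b⌋ f)`
  have hsplit := htail.add ((tendsto_nat_floor_div_atTop (R := ℝ)).smul hfloor)
  rw [zero_add, one_smul] at hsplit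
  refine hsplit.congr' ?_
  filter_upwards [eventually_ge_atTop 1] with b hb
  have hn : (⌊b⌋₊:ℝ) ≠ 0 := by exact_mod_cast (Nat.floor_pos.2 hb).ne'
  have hcoef : (⌊b⌋₊:ℝ) / b * (⌊b⌋₊:ℝ)⁻¹ = b⁻¹ := by field_simp
  rw [Function.comp_apply, smul_smul, hcoef, ← smul_add, add_comm,
    intervalIntegral.integral_add_adjacent_intervals (hf _ _) (hf _ _)]

end

theorem stmt2_general {V : Type*} [NormedAddCommGroup V] [NormedSpace ℝ V]
    (f : ℝ → V) (hmeas : StronglyMeasurable f)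
    (M : ℝ) (hbd : ∀ x, ‖f x‖ ≤ M)
    (A : ℝ → V)
    (hA : ∀ᵐ t ∂(volume.restrict (Set.Icc (0:ℝ) 1)),
      Tendsto (fun N : ℕ => (N : ℝ)⁻¹ • ∑ n ∈ Finset.range N, f (t + n))
        atTop (𝓝 (A t))) :
    Tendsto (fun b : ℝ => b⁻¹ • ∫ x in Set.Icc (0:ℝ) b, f x) atTop
      (𝓝 (∫ t in Set.Icc (0:ℝ) 1, A t)) := by
  have hf : AEStronglyMeasurable f volume := hmeas.aestronglyMeasurable
  refine (tendsto_inv_smul_intervalIntegral_of_nat (intervalIntegrable_of_norm_le hf hbd) hbd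
    (tendsto_inv_smul_intervalIntegral_nat_of_cesaro hf hbd hA)).congr' ?_
  filter_upwards [eventually_ge_atTop 0] with b hb
  rw [integral_Icc_eq_integral_Ioc, intervalIntegral.integral_of_le hb]

theorem stmt2 {V : Type*} [NormedAddCommGroup V] [NormedSpace ℝ V]
    [CompleteSpace V] [SecondCountableTopology V]
    (f : ℝ → V) (hmeas : StronglyMeasurable f)
    (M : ℝ) (hbd : ∀ x, ‖f x‖ ≤ M)
    (A : ℝ → V)
    (hA : ∀ᵐ t ∂(volume.restrict (Set.Icc (0:ℝ) 1)),
      Tendsto (fun N : ℕ => (N : ℝ)⁻¹ • ∑ n ∈ Finset.range N, f (t + n))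
        atTop (𝓝 (A t))) :
    Tendsto (fun b : ℝ => b⁻¹ • ∫ x in Set.Icc (0:ℝ) b, f x) atTop
      (𝓝 (∫ t in Set.Icc (0:ℝ) 1, A t)) :=
  stmt2_general f hmeas M hbd A hA
end

section
/- Let f : [0,∞) → V be a bounded measurable function into a separable Banach space V such that for almost every t ∈ [0,1] the uniform Cesàro limit A_t = lim_{N-M→∞} (1/(N-M)) ∑_{n=M+1}^{N} f(t+n) exists (over integers 0 ≤ M < N). Then lim_{b-a→∞} (1/(b-a)) ∫_a^b f(x) dx exists (over reals 0 ≤ a < b) and equals ∫_0^1 A_t dt. -/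
/-!
Averaging the Cesàro averages `(n - m)⁻¹ ∑_{k=m+1}^{n} f (t + k)` over `t ∈ [0, 1]` gives exactly
the continuous average of `f` over `[m + 1, n + 1]`, so by dominated convergence (`f` is bounded)
these continuous averages tend to `∫₀¹ A` as `n - m → ∞`. A real interval `[a, b]` contains such an
interval `[m + 1, n + 1]` with at most length `3` to spare, and for `‖f‖ ≤ M` this changes the
average by at most `6 M / (b - a)`.
-/

open MeasureTheory Filter Topology

section

variable {V : Type*} [NormedAddCommGroup V] [NormedSpace ℝ V]

noncomputable def cesaroAvg (f : ℝ → V) (m n : ℕ) (t : ℝ) : V :=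
  ((n - m : ℕ) : ℝ)⁻¹ • ∑ k ∈ Finset.Ioc m n, f (t + k)

/-- `n - m → ∞`; no `m < n` constraint is needed, since `1 ≤ n - m` in `ℕ` already forces it. -/
def gapAtTop : Filter (ℕ × ℕ) := comap (fun p => p.2 - p.1) atTop

instance : gapAtTop.IsCountablyGenerated := by unfold gapAtTop; infer_instance

theorem eventually_gapAtTop {P : ℕ × ℕ → Prop} :
    (∀ᶠ p in gapAtTop, P p) ↔ ∃ k, ∀ m n : ℕ, k ≤ n - m → P (m, n) := by
  simp only [gapAtTop, eventually_comap, eventually_atTop, Prod.forall]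
  exact ⟨fun ⟨k, hk⟩ => ⟨k, fun m n h => hk _ h m n rfl⟩,
    fun ⟨k, hk⟩ => ⟨k, fun _ h m n hmn => hk m n (hmn ▸ h)⟩⟩

theorem tendsto_gapAtTop_of_forall_gap_lt {E : Type*} [SeminormedAddCommGroup E]
    {u : ℕ → ℕ → E} {x : E}
    (h : ∀ ε > (0 : ℝ), ∃ L : ℕ, ∀ m n : ℕ, m < n → L < n - m → ‖u m n - x‖ < ε) :
    Tendsto (fun p : ℕ × ℕ => u p.1 p.2) gapAtTop (𝓝 x) :=
  Metric.tendsto_nhds.2 fun ε hε =>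
    let ⟨L, hL⟩ := h ε hε
    eventually_gapAtTop.2 ⟨L + 1, fun m n hmn => by
      rw [dist_eq_norm]; exact hL m n (by omega) (by omega)⟩

theorem norm_cesaroAvg_le {f : ℝ → V} {M : ℝ} (hM : ∀ x, ‖f x‖ ≤ M) (m n : ℕ) (t : ℝ) :
    ‖cesaroAvg f m n t‖ ≤ M := by
  have hM0 : 0 ≤ M := (norm_nonneg _).trans (hM 0)
  have hsum : ‖∑ k ∈ Finset.Ioc m n, f (t + k)‖ ≤ ((n - m : ℕ) : ℝ) * M := by
    refine (norm_sum_le _ _).trans ?_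
    simpa [nsmul_eq_mul] using
      Finset.sum_le_card_nsmul (Finset.Ioc m n) (fun k : ℕ => ‖f (t + k)‖) M fun k _ => hM (t + k)
  rw [cesaroAvg, norm_smul, norm_inv, RCLike.norm_natCast]
  rcases Nat.eq_zero_or_pos (n - m) with hzero | hpos
  · simpa [hzero] using hM0
  · rw [inv_mul_le_iff₀ (by exact_mod_cast hpos)]
    exact hsum

theorem stronglyMeasurable_cesaroAvg {f : ℝ → V} (hf : StronglyMeasurable f) (m n : ℕ) :
    StronglyMeasurable (cesaroAvg f m n) :=
  (Finset.stronglyMeasurable_fun_sum _ fun _ _ =>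
    hf.comp_measurable (measurable_add_const _)).const_smul _

theorem tendsto_integral_cesaroAvg {f : ℝ → V} {M : ℝ} (hf : StronglyMeasurable f)
    (hM : ∀ x, ‖f x‖ ≤ M) {μ : Measure ℝ} [IsFiniteMeasure μ] {l : Filter (ℕ × ℕ)}
    [l.IsCountablyGenerated] {A : ℝ → V}
    (hA : ∀ᵐ t ∂μ, Tendsto (fun p : ℕ × ℕ => cesaroAvg f p.1 p.2 t) l (𝓝 (A t))) :
    Tendsto (fun p : ℕ × ℕ => ∫ t, cesaroAvg f p.1 p.2 t ∂μ) l (𝓝 (∫ t, A t ∂μ)) :=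
  tendsto_integral_filter_of_dominated_convergence (fun _ => M)
    (.of_forall fun p => (stronglyMeasurable_cesaroAvg hf p.1 p.2).aestronglyMeasurable)
    (.of_forall fun p => .of_forall (norm_cesaroAvg_le hM p.1 p.2)) (integrable_const M) hA

theorem integral_Icc_cesaroAvg {f : ℝ → V} (hf : LocallyIntegrable f) {m n : ℕ} (hmn : m ≤ n) :
    ∫ t in Set.Icc (0 : ℝ) 1, cesaroAvg f m n t
      = ((n - m : ℕ) : ℝ)⁻¹ • ∫ x in (m + 1 : ℝ)..(n + 1), f x := by
  have hint (u v : ℝ) : IntervalIntegrable f volume u v :=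
    (hf.integrableOn_isCompact isCompact_uIcc).intervalIntegrable
  have htranslate (k : ℕ) : ∫ t in (0 : ℝ)..1, f (t + k) = ∫ x in (k : ℝ)..(k + 1 : ℕ), f x := by
    rw [intervalIntegral.integral_comp_add_right]; push_cast; ring_nf
  have hint_translate (k : ℕ) : IntervalIntegrable (fun t => f (t + k)) volume 0 1 := by
    simpa using (hint k (k + 1)).comp_add_right k
  rw [integral_Icc_eq_integral_Ioc, ← intervalIntegral.integral_of_le zero_le_one]
  simp only [cesaroAvg, intervalIntegral.integral_smul]
  rw [intervalIntegral.integral_finsetSum fun k _ => hint_translate k]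
  simp only [htranslate, ← Finset.Ico_add_one_add_one_eq_Ioc]
  rw [intervalIntegral.sum_integral_adjacent_intervals_Ico (a := Nat.cast)
    (by omega) fun k _ => hint _ _]
  push_cast; rfl

theorem norm_average_sub_average_le {f : ℝ → V} {a b c d M : ℝ} (hac : a ≤ c) (hcd : c < d)
    (hdb : d ≤ b) (hf : IntervalIntegrable f volume a b) (hM : ∀ x ∈ Set.Icc a b, ‖f x‖ ≤ M) :
    ‖(b - a)⁻¹ • (∫ x in a..b, f x) - (d - c)⁻¹ • ∫ x in c..d, f x‖
      ≤ 2 * M * ((b - a) - (d - c)) / (b - a) := by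
  have hint {u v : ℝ} (hu : a ≤ u) (huv : u ≤ v) (hv : v ≤ b) : IntervalIntegrable f volume u v :=
    hf.mono_set <| Set.uIcc_subset_uIcc (Set.mem_uIcc_of_le hu (huv.trans hv))
      (Set.mem_uIcc_of_le (hu.trans huv) hv)
  have hbound {u v : ℝ} (hu : a ≤ u) (huv : u ≤ v) (hv : v ≤ b) :
      ‖∫ x in u..v, f x‖ ≤ M * (v - u) := by
    rw [← abs_of_nonneg (sub_nonneg.2 huv)]
    exact intervalIntegral.norm_integral_le_of_norm_le_const fun x hx =>
      hM x (by rw [Set.uIoc_of_le huv] at hx; exact ⟨hu.trans hx.1.le, hx.2.trans hv⟩)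
  obtain ⟨E, hsplit, hE⟩ : ∃ E, ∫ x in a..b, f x = E + ∫ x in c..d, f x ∧
      ‖E‖ ≤ M * ((b - a) - (d - c)) := by
    refine ⟨(∫ x in a..c, f x) + ∫ x in d..b, f x, ?_, (norm_add_le _ _).trans ?_⟩
    · rw [← intervalIntegral.integral_add_adjacent_intervals (hint le_rfl hac (hcd.le.trans hdb))
        (hint hac (hcd.le.trans hdb) le_rfl),
        ← intervalIntegral.integral_add_adjacent_intervals (hint hac hcd.le hdb)
        (hint (hac.trans hcd.le) hdb le_rfl)]
      abel
    · linarith [hbound le_rfl hac (hcd.le.trans hdb), hbound (hac.trans hcd.le) hdb le_rfl]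
  have hJ := hbound hac hcd.le hdb
  set J := ∫ x in c..d, f x
  have hab : 0 < b - a := by linarith
  have hdc : 0 < d - c := by linarith
  have hcoef : 0 ≤ ((b - a) - (d - c)) / ((b - a) * (d - c)) :=
    div_nonneg (by linarith) (by positivity)
  have hrewrite : (b - a)⁻¹ • (E + J) - (d - c)⁻¹ • J
      = (b - a)⁻¹ • E - (((b - a) - (d - c)) / ((b - a) * (d - c))) • J := by
    match_scalars
    · rfl
    · field_simp
      ring
  rw [hsplit, hrewrite]
  calc _ ≤ ‖(b - a)⁻¹ • E‖ + ‖(((b - a) - (d - c)) / ((b - a) * (d - c))) • J‖ := norm_sub_le _ _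
    _ ≤ (b - a)⁻¹ * (M * ((b - a) - (d - c)))
        + ((b - a) - (d - c)) / ((b - a) * (d - c)) * (M * (d - c)) := by
      rw [norm_smul, norm_smul, Real.norm_of_nonneg (by positivity),
        Real.norm_of_nonneg hcoef]
      gcongr
    _ = _ := by field_simp; ring

/-- `∫ x in s, f x - K` parses as `∫ x in s, (f x - K)`: this is the shape of the average in
the theorem below. -/
theorem inv_smul_integral_Icc_sub_const [CompleteSpace V] {f : ℝ → V} {a b : ℝ} (hab : a < b)
    (hf : IntegrableOn f (Set.Icc a b)) (K : V) :
    (b - a)⁻¹ • ∫ x in Set.Icc a b, f x - K = (b - a)⁻¹ • (∫ x in a..b, f x) - K := by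
  rw [integral_sub hf (integrable_const K), setIntegral_const, Real.volume_real_Icc_of_le hab.le,
    smul_sub, smul_smul, inv_mul_cancel₀ (sub_ne_zero.2 hab.ne'), one_smul,
    integral_Icc_eq_integral_Ioc, intervalIntegral.integral_of_le hab.le]

theorem exists_nat_subinterval {a b : ℝ} (ha : 0 ≤ a) (hb : 1 ≤ b) :
    ∃ m n : ℕ, a ≤ m + 1 ∧ (n : ℝ) + 1 ≤ b ∧ b - a < n - m + 3 := by
  refine ⟨⌈a⌉₊, ⌊b - 1⌋₊, ?_, ?_, ?_⟩
  · linarith [Nat.le_ceil a]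
  · linarith [Nat.floor_le (sub_nonneg.2 hb)]
  · linarith [Nat.ceil_lt_add_one ha, Nat.lt_floor_add_one (b - 1)]

end

theorem stmt3_general {V : Type*} [NormedAddCommGroup V] [NormedSpace ℝ V]
    [CompleteSpace V]
    (f : ℝ → V) (hmeas : StronglyMeasurable f)
    (M : ℝ) (hbd : ∀ x, ‖f x‖ ≤ M)
    (A : ℝ → V)
    (hA : ∀ᵐ t ∂(volume.restrict (Set.Icc (0:ℝ) 1)),
      ∀ ε > (0:ℝ), ∃ L : ℕ, ∀ M₀ N : ℕ, M₀ < N → L < N - M₀ →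
        ‖((N - M₀ : ℕ) : ℝ)⁻¹ • ∑ n ∈ Finset.Ioc M₀ N, f (t + n) - A t‖ < ε) :
    ∀ ε > (0:ℝ), ∃ L : ℝ, ∀ a b : ℝ, 0 ≤ a → a < b → L < b - a →
      ‖(b - a)⁻¹ • ∫ x in Set.Icc a b, f x - ∫ t in Set.Icc (0:ℝ) 1, A t‖ < ε := by
  intro ε hε
  have hloc : LocallyIntegrable f :=
    (memLp_top_of_bound hmeas.aestronglyMeasurable M (.of_forall hbd)).locallyIntegrable le_top
  have hlim := tendsto_integral_cesaroAvg hmeas hbd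
    (hA.mono fun _ => tendsto_gapAtTop_of_forall_gap_lt)
  obtain ⟨k, hk⟩ := eventually_gapAtTop.1 <| hlim.eventually (Metric.ball_mem_nhds _ (half_pos hε))
  refine ⟨max (k + 3) (12 * M / ε), fun a b ha hab hL => ?_⟩
  rw [max_lt_iff, div_lt_iff₀' hε] at hL
  obtain ⟨m, n, hm, hn, hgap⟩ := exists_nat_subinterval ha (show 1 ≤ b by linarith)
  have hmn : m < n := by exact_mod_cast (by linarith : (m : ℝ) < n)
  have hkmn : k ≤ n - m := by
    exact_mod_cast (by rw [Nat.cast_sub hmn.le]; linarith : (k : ℝ) ≤ (n - m : ℕ))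
  have hcesaro := hk m n hkmn
  rw [dist_eq_norm, integral_Icc_cesaroAvg hloc hmn.le, Nat.cast_sub hmn.le] at hcesaro
  have hnear := norm_average_sub_average_le hm (by linarith) hn
    ((hloc.integrableOn_isCompact isCompact_uIcc).intervalIntegrable) fun x _ => hbd x
  rw [add_sub_add_right_eq_sub] at hnear
  have hedge : 2 * M * ((b - a) - (n - m)) / (b - a) < ε / 2 := by
    rw [div_lt_iff₀ (by linarith)]
    nlinarith [(norm_nonneg _).trans (hbd 0)]
  rw [inv_smul_integral_Icc_sub_const hab (hloc.integrableOn_isCompact isCompact_Icc)]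
  set J := ((n : ℝ) - m)⁻¹ • ∫ x in (m + 1 : ℝ)..(n + 1), f x
  calc _ ≤ _ := norm_sub_le_norm_sub_add_norm_sub _ J _
    _ < ε / 2 + ε / 2 := add_lt_add (hnear.trans_lt hedge) hcesaro
    _ = ε := add_halves ε

theorem stmt3 {V : Type*} [NormedAddCommGroup V] [NormedSpace ℝ V]
    [CompleteSpace V] [SecondCountableTopology V]
    (f : ℝ → V) (hmeas : StronglyMeasurable f)
    (M : ℝ) (hbd : ∀ x, ‖f x‖ ≤ M)
    (A : ℝ → V)
    (hA : ∀ᵐ t ∂(volume.restrict (Set.Icc (0:ℝ) 1)),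
      ∀ ε > (0:ℝ), ∃ L : ℕ, ∀ M₀ N : ℕ, M₀ < N → L < N - M₀ →
        ‖((N - M₀ : ℕ) : ℝ)⁻¹ • ∑ n ∈ Finset.Ioc M₀ N, f (t + n) - A t‖ < ε) :
    ∀ ε > (0:ℝ), ∃ L : ℝ, ∀ a b : ℝ, 0 ≤ a → a < b → L < b - a →
      ‖(b - a)⁻¹ • ∫ x in Set.Icc a b, f x - ∫ t in Set.Icc (0:ℝ) 1, A t‖ < ε :=
  stmt3_general f hmeas M hbd A hA
end

section
/- If f : [0,∞) → ℝ is a bounded measurable function, then liminf_{b→∞} (1/b) ∫_0^b f(x) dx ≥ ∫_0^1 liminf_{N→∞} (1/N) ∑_{n=0}^{N-1} f(t+n) dt, and limsup_{b→∞} (1/b) ∫_0^b f(x) dx ≤ ∫_0^1 limsup_{N→∞} (1/N) ∑_{n=0}^{N-1} f(t+n) dt. -/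
/-!
Substituting `x = t + n` cuts `∫_{[0,N]} f` into unit pieces, so the average of `f` over `[0,N]`
is the integral over `t ∈ [0,1]` of the Birkhoff average `N⁻¹ ∑_{n<N} f (t + n)` of the unit
translation. These Birkhoff averages are bounded by `sup |f|`, so Fatou's lemma bounds the
integral of their `liminf` by the `liminf` of the averages over `[0,N]`, `N ∈ ℕ`. Since `f` is
bounded, the averages over `[0,b]` and `[0,⌊b⌋]` differ by `O(1/b)`, so the `liminf` along the
integers is at most the one along the reals. The `limsup` inequality is the `liminf` one for `-f`.
-/

open MeasureTheory Filter Topology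

section LiminfOfBounded

variable {ι : Type*} {l : Filter ι} {u : ι → ℝ} {M : ℝ}

lemma isBoundedUnder_of_abs_le (h : ∀ i, |u i| ≤ M) :
    l.IsBoundedUnder (· ≤ ·) u ∧ l.IsBoundedUnder (· ≥ ·) u :=
  isBoundedUnder_le_abs.1 (isBoundedUnder_of ⟨M, h⟩)

lemma abs_liminf_le_of_abs_le [l.NeBot] (h : ∀ i, |u i| ≤ M) : |liminf u l| ≤ M := by
  obtain ⟨hle, hge⟩ := isBoundedUnder_of_abs_le (l := l) h
  refine abs_le.2 ⟨le_liminf_of_le hle.isCoboundedUnder_ge ?_, ?_⟩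
  · exact Eventually.of_forall fun i => (abs_le.1 (h i)).1
  · exact (liminf_le_limsup hle hge).trans <| limsup_le_of_le hge.isCoboundedUnder_le <|
      Eventually.of_forall fun i => (abs_le.1 (h i)).2

lemma liminf_neg_eq_neg_limsup [l.NeBot] (h : ∀ i, |u i| ≤ M) :
    liminf (fun i => -u i) l = -limsup u l := by
  obtain ⟨hle, hge⟩ := isBoundedUnder_of_abs_le (l := l) h
  simpa using liminf_const_sub l u 0 hle hge.isCoboundedUnder_le

lemma ENNReal.ofReal_liminf [l.NeBot] (h : ∀ i, |u i| ≤ M) :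
    ENNReal.ofReal (liminf u l) = liminf (fun i => ENNReal.ofReal (u i)) l := by
  obtain ⟨hle, hge⟩ := isBoundedUnder_of_abs_le (l := l) h
  exact ENNReal.ofReal_mono.map_liminf_of_continuousAt u ENNReal.continuous_ofReal.continuousAt
    hle.isCoboundedUnder_ge hge

end LiminfOfBounded

lemma liminf_natCast_le_liminf {u : ℝ → ℝ} {M : ℝ} (hu : ∀ x, |u x| ≤ M)
    (h : Tendsto (fun x => u x - u ⌊x⌋₊) atTop (𝓝 0)) :
    liminf (fun n : ℕ => u n) atTop ≤ liminf u atTop := by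
  have hfloor (x : ℝ) : |u ⌊x⌋₊| ≤ M := hu _
  have hdiff (x : ℝ) : |u x - u ⌊x⌋₊| ≤ M + M :=
    (abs_sub _ _).trans (add_le_add (hu x) (hu _))
  calc liminf (fun n : ℕ => u n) atTop ≤ liminf (fun x : ℝ => u ⌊x⌋₊) atTop :=
        liminf_le_liminf_of_le (tendsto_nat_floor_atTop (α := ℝ))
          (isBoundedUnder_of_abs_le fun n : ℕ => hu n).2
          (isBoundedUnder_of_abs_le hfloor).1.isCoboundedUnder_ge
    _ = liminf (fun x => u ⌊x⌋₊) atTop + liminf (fun x => u x - u ⌊x⌋₊) atTop := by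
        rw [h.liminf_eq, add_zero]
    _ ≤ liminf (fun x => u ⌊x⌋₊ + (u x - u ⌊x⌋₊)) atTop :=
        le_liminf_add (isBoundedUnder_of_abs_le hfloor).2 (isBoundedUnder_of_abs_le hfloor).1
          (isBoundedUnder_of_abs_le hdiff).2 (isBoundedUnder_of_abs_le hdiff).1.isCoboundedUnder_ge
    _ = liminf u atTop := by simp

section Fatou

variable {α : Type*} [MeasurableSpace α] {μ : Measure α} [IsFiniteMeasure μ] {M : ℝ}

lemma integrable_of_abs_le {φ : α → ℝ} (hφ : Measurable φ) (hM : ∀ x, |φ x| ≤ M) :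
    Integrable φ μ :=
  .of_bound hφ.aestronglyMeasurable M <| ae_of_all _ fun x => (Real.norm_eq_abs _).trans_le (hM x)

lemma abs_integral_le_of_abs_le {φ : α → ℝ} (hM : ∀ x, |φ x| ≤ M) :
    |∫ x, φ x ∂μ| ≤ M * μ.real Set.univ := by
  simpa using norm_integral_le_of_norm_le_const (μ := μ) <|
    ae_of_all _ fun x => (Real.norm_eq_abs _).trans_le (hM x)

variable {g : ℕ → α → ℝ}

lemma integral_liminf_le_liminf_integral_of_nonneg (hg : ∀ n, Measurable (g n))
    (hM : ∀ n x, |g n x| ≤ M) (h0 : ∀ n x, 0 ≤ g n x) :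
    ∫ x, liminf (g · x) atTop ∂μ ≤ liminf (fun n => ∫ x, g n x ∂μ) atTop := by
  have hintM n : |∫ x, g n x ∂μ| ≤ M * μ.real Set.univ := abs_integral_le_of_abs_le (hM n)
  have h0lim x : 0 ≤ liminf (g · x) atTop :=
    le_liminf_of_le (isBoundedUnder_of_abs_le (hM · x)).1.isCoboundedUnder_ge
      (Eventually.of_forall (h0 · x))
  refine (ENNReal.ofReal_le_ofReal_iff ?_).1 ?_
  · exact le_liminf_of_le (isBoundedUnder_of_abs_le hintM).1.isCoboundedUnder_ge <|
      Eventually.of_forall fun n => integral_nonneg (h0 n)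
  calc ENNReal.ofReal (∫ x, liminf (g · x) atTop ∂μ)
      = ∫⁻ x, liminf (fun n => ENNReal.ofReal (g n x)) atTop ∂μ := by
        rw [ofReal_integral_eq_lintegral_ofReal (integrable_of_abs_le (Measurable.liminf hg)
          fun x => abs_liminf_le_of_abs_le (hM · x)) (ae_of_all _ h0lim)]
        exact lintegral_congr fun x => ENNReal.ofReal_liminf (hM · x)
    _ ≤ liminf (fun n => ∫⁻ x, ENNReal.ofReal (g n x) ∂μ) atTop :=
        lintegral_liminf_le fun n => (hg n).ennreal_ofReal
    _ = ENNReal.ofReal (liminf (fun n => ∫ x, g n x ∂μ) atTop) := by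
        rw [ENNReal.ofReal_liminf hintM]
        congr with n
        exact (ofReal_integral_eq_lintegral_ofReal (integrable_of_abs_le (hg n) (hM n))
          (ae_of_all _ (h0 n))).symm

theorem integral_liminf_le_liminf_integral (hg : ∀ n, Measurable (g n))
    (hM : ∀ n x, |g n x| ≤ M) :
    ∫ x, liminf (g · x) atTop ∂μ ≤ liminf (fun n => ∫ x, g n x ∂μ) atTop := by
  have hshift := integral_liminf_le_liminf_integral_of_nonneg (μ := μ)
    (g := fun n x => g n x + M) (M := 2 * M) (fun n => (hg n).add_const M)
    (fun n x => abs_le.2 ⟨by linarith [abs_le.1 (hM n x)], by linarith [abs_le.1 (hM n x)]⟩)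
    (fun n x => by linarith [(abs_le.1 (hM n x)).1])
  obtain ⟨hle, hge⟩ := isBoundedUnder_of_abs_le (l := atTop)
    fun n => abs_integral_le_of_abs_le (μ := μ) (hM n)
  simp only [fun x => liminf_add_const atTop (g · x) M
      (isBoundedUnder_of_abs_le (hM · x)).1.isCoboundedUnder_ge
      (isBoundedUnder_of_abs_le (hM · x)).2,
    integral_add (integrable_of_abs_le (Measurable.liminf hg)
      fun x => abs_liminf_le_of_abs_le (hM · x)) (integrable_const M),
    fun n => integral_add (integrable_of_abs_le (hg n) (hM n)) (integrable_const (μ := μ) M)]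
    at hshift
  rw [liminf_add_const atTop _ _ hle.isCoboundedUnder_ge hge] at hshift
  linarith

end Fatou

section BirkhoffAverage

lemma abs_birkhoffAverage_le {α : Type*} {T : α → α} {φ : α → ℝ} {M : ℝ}
    (hφ : ∀ x, |φ x| ≤ M) (n : ℕ) (x : α) : |birkhoffAverage ℝ T φ n x| ≤ M := by
  have hM : 0 ≤ M := (abs_nonneg _).trans (hφ x)
  rcases n.eq_zero_or_pos with rfl | hn
  · simpa using hM
  have hsum : |birkhoffSum T φ n x| ≤ n * M := by
    simpa [birkhoffSum] using (Finset.abs_sum_le_sum_abs _ (Finset.range n)).trans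
      (Finset.sum_le_sum fun k _ => hφ (T^[k] x))
  rw [birkhoffAverage, smul_eq_mul, abs_mul, abs_inv, Nat.abs_cast,
    inv_mul_le_iff₀ (by exact_mod_cast hn)]
  exact hsum

lemma measurable_birkhoffAverage {α : Type*} [MeasurableSpace α] {T : α → α} {φ : α → ℝ}
    (hT : Measurable T) (hφ : Measurable φ) (n : ℕ) : Measurable (birkhoffAverage ℝ T φ n) :=
  ((Finset.measurable_sum _ fun k _ => hφ.comp (hT.iterate k)).const_smul (n : ℝ)⁻¹ :)

lemma birkhoffAverage_add_one (f : ℝ → ℝ) (N : ℕ) (t : ℝ) :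
    birkhoffAverage ℝ (· + 1) f N t = (N : ℝ)⁻¹ * ∑ n ∈ Finset.range N, f (t + n) := by
  simp [birkhoffAverage, birkhoffSum, add_right_iterate_apply]

end BirkhoffAverage

lemma integral_Icc_natCast_eq_sum {E : Type*} [NormedAddCommGroup E] [NormedSpace ℝ E]
    {f : ℝ → E} (hf : ∀ a b, IntervalIntegrable f volume a b) (N : ℕ) :
    ∫ x in Set.Icc 0 (N : ℝ), f x
      = ∑ n ∈ Finset.range N, ∫ t in Set.Icc (0 : ℝ) 1, f (t + n) := by
  have hunit (n : ℕ) :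
      ∫ t in Set.Icc (0 : ℝ) 1, f (t + n) = ∫ x in (n : ℝ)..(n + 1 : ℕ), f x := by
    rw [integral_Icc_eq_integral_Ioc, ← intervalIntegral.integral_of_le zero_le_one,
      intervalIntegral.integral_comp_add_right]
    push_cast; ring_nf
  simp only [hunit]
  rw [intervalIntegral.sum_integral_adjacent_intervals fun k _ => hf _ _, Nat.cast_zero,
    intervalIntegral.integral_of_le N.cast_nonneg, integral_Icc_eq_integral_Ioc]

noncomputable def integralAverage (f : ℝ → ℝ) (b : ℝ) : ℝ :=
  b⁻¹ * ∫ x in Set.Icc 0 b, f x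

section IntegralAverage

variable {f : ℝ → ℝ} {M : ℝ}

lemma integralAverage_neg : integralAverage (-f) = fun b => -integralAverage f b := by
  ext b; simp [integralAverage, integral_neg]

lemma mul_integralAverage {b : ℝ} (hb : 0 ≤ b) :
    b * integralAverage f b = ∫ x in (0 : ℝ)..b, f x := by
  rw [integralAverage, intervalIntegral.integral_of_le hb, integral_Icc_eq_integral_Ioc]
  rcases hb.eq_or_lt with rfl | hb
  · simp
  · field_simp

lemma abs_integralAverage_le (hf : ∀ x, |f x| ≤ M) (b : ℝ) : |integralAverage f b| ≤ M := by
  have hM : 0 ≤ M := (abs_nonneg _).trans (hf 0)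
  have hint : |∫ x in Set.Icc 0 b, f x| ≤ M * max b 0 := by
    simpa [Real.volume_real_Icc] using norm_setIntegral_le_of_norm_le_const (μ := volume)
      (s := Set.Icc 0 b) measure_Icc_lt_top fun x _ => (Real.norm_eq_abs _).trans_le (hf x)
  rw [integralAverage, abs_mul, abs_inv]
  rcases le_or_gt b 0 with hb | hb
  · rw [max_eq_right hb, mul_zero] at hint
    simpa [abs_nonpos_iff.1 hint] using hM
  · rw [max_eq_left hb.le] at hint
    rw [abs_of_pos hb]
    calc b⁻¹ * |∫ x in Set.Icc 0 b, f x| ≤ b⁻¹ * (M * b) := by gcongr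
      _ = M := by field_simp

lemma integrableOn_Icc_of_abs_le (hf : Measurable f) (hbd : ∀ x, |f x| ≤ M) (a b : ℝ) :
    IntegrableOn f (Set.Icc a b) :=
  .of_bound measure_Icc_lt_top hf.aestronglyMeasurable M <|
    ae_of_all _ fun x => (Real.norm_eq_abs _).trans_le (hbd x)

lemma setIntegral_birkhoffAverage_add_one (hf : Measurable f) (hbd : ∀ x, |f x| ≤ M) (N : ℕ) :
    ∫ t in Set.Icc (0 : ℝ) 1, birkhoffAverage ℝ (· + 1) f N t = integralAverage f N := by
  have htrans (n : ℕ) : IntegrableOn (fun t => f (t + n)) (Set.Icc 0 1) :=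
    integrableOn_Icc_of_abs_le (hf.comp (measurable_add_const _)) (fun x => hbd _) 0 1
  simp only [birkhoffAverage_add_one]
  rw [integral_const_mul, integral_finsetSum _ fun n _ => htrans n, integralAverage,
    integral_Icc_natCast_eq_sum fun a b =>
      (integrableOn_Icc_of_abs_le hf hbd _ _).intervalIntegrable]

lemma abs_integralAverage_sub_floor_le (hf : Measurable f) (hbd : ∀ x, |f x| ≤ M) {b : ℝ}
    (hb : 0 < b) : |integralAverage f b - integralAverage f ⌊b⌋₊| ≤ 2 * M / b := by
  set N := ⌊b⌋₊
  have hNb : (N : ℝ) ≤ b := Nat.floor_le hb.le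
  have hbN : b - N ≤ 1 := by linarith [Nat.lt_floor_add_one b]
  have hii (x y : ℝ) : IntervalIntegrable f volume x y :=
    (integrableOn_Icc_of_abs_le hf hbd _ _).intervalIntegrable
  have htail : |∫ x in (N : ℝ)..b, f x| ≤ M * (b - N) := by
    simpa [abs_of_nonneg (sub_nonneg.2 hNb)] using
      intervalIntegral.norm_integral_le_of_norm_le_const (a := (N : ℝ)) (b := b)
        fun x _ => (Real.norm_eq_abs _).trans_le (hbd x)
  have hsplit : b * (integralAverage f b - integralAverage f N)
      = (∫ x in (N : ℝ)..b, f x) - (b - N) * integralAverage f N := by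
    rw [mul_sub, mul_integralAverage hb.le, ← intervalIntegral.integral_add_adjacent_intervals
      (hii 0 N) (hii N b), ← mul_integralAverage N.cast_nonneg]
    ring
  have hAN := abs_integralAverage_le hbd (N : ℝ)
  rw [le_div_iff₀ hb]
  calc |integralAverage f b - integralAverage f N| * b
        = |(∫ x in (N : ℝ)..b, f x) - (b - N) * integralAverage f N| := by
        rw [← hsplit, abs_mul, abs_of_pos hb, mul_comm]
    _ ≤ |∫ x in (N : ℝ)..b, f x| + (b - N) * |integralAverage f N| := by
        refine (abs_sub _ _).trans_eq ?_
        rw [abs_mul, abs_of_nonneg (sub_nonneg.2 hNb)]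
    _ ≤ M * (b - N) + (b - N) * M := by gcongr
    _ ≤ 2 * M := by nlinarith [(abs_nonneg _).trans (hbd 0)]

lemma tendsto_integralAverage_sub_floor (hf : Measurable f) (hbd : ∀ x, |f x| ≤ M) :
    Tendsto (fun b => integralAverage f b - integralAverage f ⌊b⌋₊) atTop (𝓝 0) :=
  squeeze_zero_norm' ((eventually_gt_atTop 0).mono fun _ hb =>
      (Real.norm_eq_abs _).trans_le (abs_integralAverage_sub_floor_le hf hbd hb))
    (tendsto_const_nhds.div_atTop tendsto_id)

theorem integral_liminf_birkhoffAverage_le (hf : Measurable f) (hbd : ∀ x, |f x| ≤ M) :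
    ∫ t in Set.Icc (0 : ℝ) 1, liminf (fun N => birkhoffAverage ℝ (· + 1) f N t) atTop
      ≤ liminf (integralAverage f) atTop :=
  calc _ ≤ liminf
          (fun N : ℕ => ∫ t in Set.Icc (0 : ℝ) 1, birkhoffAverage ℝ (· + 1) f N t) atTop :=
        integral_liminf_le_liminf_integral
          (measurable_birkhoffAverage (measurable_add_const 1) hf) (abs_birkhoffAverage_le hbd)
    _ = liminf (fun N : ℕ => integralAverage f N) atTop := by
        simp only [setIntegral_birkhoffAverage_add_one hf hbd]
    _ ≤ liminf (integralAverage f) atTop :=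
        liminf_natCast_le_liminf (abs_integralAverage_le hbd)
          (tendsto_integralAverage_sub_floor hf hbd)

theorem limsup_integralAverage_le_integral_limsup (hf : Measurable f) (hbd : ∀ x, |f x| ≤ M) :
    limsup (integralAverage f) atTop
      ≤ ∫ t in Set.Icc (0 : ℝ) 1,
          limsup (fun N => birkhoffAverage ℝ (· + 1) f N t) atTop := by
  have hneg :=
    integral_liminf_birkhoffAverage_le hf.neg fun x => (abs_neg (f x)).trans_le (hbd x)
  have hlim (t : ℝ) : liminf (fun N => -birkhoffAverage ℝ (· + 1) f N t) atTop
      = -limsup (fun N => birkhoffAverage ℝ (· + 1) f N t) atTop :=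
    liminf_neg_eq_neg_limsup (abs_birkhoffAverage_le hbd · t)
  simp only [birkhoffAverage_neg, Pi.neg_apply, integralAverage_neg, hlim, integral_neg,
    liminf_neg_eq_neg_limsup (abs_integralAverage_le hbd)] at hneg
  linarith

end IntegralAverage

theorem stmt4 (f : ℝ → ℝ) (hmeas : Measurable f)
    (M : ℝ) (hbd : ∀ x, |f x| ≤ M) :
    (liminf (fun b : ℝ => b⁻¹ * ∫ x in Set.Icc (0:ℝ) b, f x) atTop
      ≥ ∫ t in Set.Icc (0:ℝ) 1,
          liminf (fun N : ℕ => (N : ℝ)⁻¹ * ∑ n ∈ Finset.range N, f (t + n)) atTop)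
    ∧
    (limsup (fun b : ℝ => b⁻¹ * ∫ x in Set.Icc (0:ℝ) b, f x) atTop
      ≤ ∫ t in Set.Icc (0:ℝ) 1,
          limsup (fun N : ℕ => (N : ℝ)⁻¹ * ∑ n ∈ Finset.range N, f (t + n)) atTop) := by
  simp only [← birkhoffAverage_add_one]
  exact ⟨integral_liminf_birkhoffAverage_le hmeas hbd,
    limsup_integralAverage_le_integral_limsup hmeas hbd⟩
end

section
/- Let (v_n)_{n≥1} be a sequence in a Banach space V such that ‖v_{n+1} - v_n‖ = O(1/n) and the Cesàro limit L = lim_{N→∞} (1/N) ∑_{n=1}^{N} v_n exists. Then lim_{n→∞} v_n = L. -/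
/-!
Compare `v n` with the average of `v` over the block `(n, n + k]`, where `k ≈ δ n`. The slow
variation of `v` puts every term of the block within `k α / n ≈ α δ` of `v n`, while the block
average is a combination of the Cesàro means at `n` and `n + k` with coefficients bounded by
`1 + δ⁻¹` and summing to `1`, so it tends to `L`. Hence `‖v n - L‖` is eventually below `2 α δ`
for every `δ > 0`.
-/

open Filter Topology Finset

section

variable {E : Type*} [SeminormedAddCommGroup E]

theorem norm_sub_le_mul_of_norm_succ_sub_le {f : ℕ → E} {c : ℝ} {m n : ℕ} (hmn : m ≤ n)
    (hf : ∀ k, m ≤ k → k < n → ‖f (k + 1) - f k‖ ≤ c) :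
    ‖f n - f m‖ ≤ (n - m : ℝ) * c := by
  have := dist_le_Ico_sum_of_dist_le (f := f) (d := fun _ ↦ c) hmn fun hmk hkn ↦ by
    simpa [dist_eq_norm'] using hf _ hmk hkn
  simpa [dist_eq_norm', Nat.cast_sub hmn] using this

variable [NormedSpace ℝ E]

theorem norm_sub_inv_card_smul_sum_le {ι : Type*} {s : Finset ι} (hs : s.Nonempty)
    {f : ι → E} {x : E} {C : ℝ} (hf : ∀ i ∈ s, ‖f i - x‖ ≤ C) :
    ‖x - (#s : ℝ)⁻¹ • ∑ i ∈ s, f i‖ ≤ C := by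
  have hcard : (0 : ℝ) < #s := by exact_mod_cast hs.card_pos
  have hx : x = (#s : ℝ)⁻¹ • ∑ _i ∈ s, x := by
    rw [sum_const, ← Nat.cast_smul_eq_nsmul ℝ, inv_smul_smul₀ hcard.ne']
  rw [hx, ← smul_sub, ← sum_sub_distrib, norm_smul, norm_inv, Real.norm_natCast,
    inv_mul_le_iff₀ hcard]
  calc ‖∑ i ∈ s, (x - f i)‖ ≤ ∑ i ∈ s, ‖x - f i‖ := norm_sum_le _ _
    _ ≤ ∑ _i ∈ s, C := sum_le_sum fun i hi ↦ norm_sub_rev x (f i) ▸ hf i hi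
    _ = #s * C := by rw [sum_const, nsmul_eq_mul]

noncomputable def cesaroMean (v : ℕ → E) (N : ℕ) : E :=
  (N : ℝ)⁻¹ • ∑ n ∈ Icc 1 N, v n

theorem natCast_smul_cesaroMean (v : ℕ → E) (N : ℕ) :
    (N : ℝ) • cesaroMean v N = ∑ n ∈ Ioc 0 N, v n := by
  rw [← Icc_add_one_left_eq_Ioc]
  rcases eq_or_ne N 0 with rfl | hN
  · simp
  · exact smul_inv_smul₀ (Nat.cast_ne_zero.2 hN) _

theorem sum_Ioc_eq_smul_cesaroMean_sub (v : ℕ → E) {m n : ℕ} (hmn : m ≤ n) :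
    ∑ i ∈ Ioc m n, v i = (n : ℝ) • cesaroMean v n - (m : ℝ) • cesaroMean v m := by
  rw [natCast_smul_cesaroMean, natCast_smul_cesaroMean,
    ← sum_Ioc_consecutive v (Nat.zero_le m) hmn, add_sub_cancel_left]

theorem norm_inv_smul_sum_Ioc_sub_le (v : ℕ → E) (L : E) (n : ℕ) {k : ℕ} (hk : k ≠ 0) :
    ‖(k : ℝ)⁻¹ • ∑ i ∈ Ioc n (n + k), v i - L‖ ≤
      (n + k) / k * ‖cesaroMean v (n + k) - L‖ + n / k * ‖cesaroMean v n - L‖ := by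
  have hk' : (k : ℝ) ≠ 0 := Nat.cast_ne_zero.2 hk
  have : (k : ℝ)⁻¹ • ∑ i ∈ Ioc n (n + k), v i - L =
      ((n + k : ℝ) / k) • (cesaroMean v (n + k) - L) - ((n : ℝ) / k) • (cesaroMean v n - L) := by
    rw [sum_Ioc_eq_smul_cesaroMean_sub v (Nat.le_add_right n k)]
    push_cast
    match_scalars <;> field_simp; ring
  rw [this]
  refine (norm_sub_le _ _).trans_eq ?_
  rw [norm_smul, norm_smul, Real.norm_of_nonneg (by positivity),
    Real.norm_of_nonneg (by positivity)]

section Tauberian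

variable {v : ℕ → E} {α : ℝ} (hdiff : ∀ n : ℕ, 1 ≤ n → ‖v (n + 1) - v n‖ ≤ α / n)
include hdiff

theorem norm_sub_le_of_norm_succ_sub_le (L : E) {n k : ℕ} (hn : 1 ≤ n) (hk : k ≠ 0) :
    ‖v n - L‖ ≤ k * (α / n) +
      ((n + k) / k * ‖cesaroMean v (n + k) - L‖ + n / k * ‖cesaroMean v n - L‖) := by
  have hα : 0 ≤ α := by simpa using (norm_nonneg _).trans (hdiff 1 le_rfl)
  have hblock : ∀ j ∈ Ioc n (n + k), ‖v j - v n‖ ≤ k * (α / n) := by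
    intro j hj
    obtain ⟨hnj, hjk⟩ := mem_Ioc.1 hj
    calc ‖v j - v n‖ ≤ (j - n : ℝ) * (α / n) :=
          norm_sub_le_mul_of_norm_succ_sub_le hnj.le fun i hni _ ↦
            (hdiff i (hn.trans hni)).trans (by gcongr)
      _ ≤ k * (α / n) := by
          gcongr
          rw [sub_le_iff_le_add']
          exact_mod_cast hjk
  have hcard : #(Ioc n (n + k)) = k := by simp
  have hne : (Ioc n (n + k)).Nonempty := nonempty_Ioc.2 (by omega)
  set avg : E := (k : ℝ)⁻¹ • ∑ i ∈ Ioc n (n + k), v i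
  calc ‖v n - L‖ ≤ ‖v n - avg‖ + ‖avg - L‖ := norm_sub_le_norm_sub_add_norm_sub _ _ _
    _ ≤ _ := by
        gcongr
        · simpa only [hcard] using norm_sub_inv_card_smul_sum_le hne hblock
        · exact norm_inv_smul_sum_Ioc_sub_le v L n hk

theorem eventually_norm_sub_lt_of_tendsto_cesaroMean {L : E}
    (hC : Tendsto (cesaroMean v) atTop (𝓝 L)) (hα : 0 < α) {δ : ℝ} (hδ : 0 < δ) :
    ∀ᶠ n in atTop, ‖v n - L‖ < 2 * α * δ := by
  set k : ℕ → ℕ := fun n ↦ ⌈δ * n⌉₊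
  have hbound : ∀ n, 1 ≤ n → ‖v n - L‖ ≤ α * δ + α / n +
      ((1 + δ⁻¹) * ‖cesaroMean v (n + k n) - L‖ + δ⁻¹ * ‖cesaroMean v n - L‖) := by
    intro n hn
    have hn' : (0 : ℝ) < n := by exact_mod_cast hn
    have hδk : δ * n ≤ k n := Nat.le_ceil _
    have hk : (0 : ℝ) < k n := by positivity
    have hnk : (n : ℝ) / k n ≤ δ⁻¹ := by
      rw [div_le_iff₀ hk, inv_mul_eq_div, le_div_iff₀ hδ]
      linarith
    refine (norm_sub_le_of_norm_succ_sub_le hdiff L hn (Nat.cast_pos.1 hk).ne').trans ?_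
    gcongr
    · calc (k n : ℝ) * (α / n) ≤ (δ * n + 1) * (α / n) := by
            gcongr; exact (Nat.ceil_lt_add_one (by positivity)).le
        _ = α * δ + α / n := by field_simp
    · rw [add_div, div_self hk.ne', add_comm]
      gcongr
  have hmean : Tendsto (fun n ↦ ‖cesaroMean v n - L‖) atTop (𝓝 0) :=
    tendsto_iff_norm_sub_tendsto_zero.1 hC
  have hlim : Tendsto (fun n : ℕ ↦ α * δ + α / n +
      ((1 + δ⁻¹) * ‖cesaroMean v (n + k n) - L‖ + δ⁻¹ * ‖cesaroMean v n - L‖))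
      atTop (𝓝 (α * δ)) := by
    have hshift : Tendsto (fun n ↦ n + k n) atTop atTop :=
      tendsto_atTop_mono (fun n ↦ Nat.le_add_right n _) tendsto_id
    simpa using (tendsto_const_nhds.add (tendsto_const_div_atTop_nhds_zero_nat α)).add
      (((hmean.comp hshift).const_mul _).add (hmean.const_mul _))
  filter_upwards [eventually_ge_atTop 1,
    hlim.eventually (gt_mem_nhds (by nlinarith : α * δ < 2 * α * δ))] with n hn hlt
  exact (hbound n hn).trans_lt hlt

end Tauberian

end

theorem stmt5 {V : Type*} [NormedAddCommGroup V] [NormedSpace ℝ V]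
    (v : ℕ → V) (α : ℝ) (hα : 0 < α)
    (hdiff : ∀ n : ℕ, 1 ≤ n → ‖v (n + 1) - v n‖ ≤ α / n)
    (L : V)
    (hC : Tendsto (fun N : ℕ => (N : ℝ)⁻¹ • ∑ n ∈ Finset.Icc 1 N, v n)
      atTop (𝓝 L)) :
    Tendsto v atTop (𝓝 L) := by
  refine Metric.tendsto_nhds.2 fun ε hε ↦ ?_
  have hδ : 0 < ε / (2 * α) := by positivity
  filter_upwards [eventually_norm_sub_lt_of_tendsto_cesaroMean hdiff hC hα hδ] with n hn
  rw [dist_eq_norm]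
  convert hn using 1
  field_simp
end

section
/- Let (v_n) be an ℕ^d-indexed sequence in a Banach space V such that the multiparameter Cesàro limit v = lim_{l(N)→∞} (1/w(N)) ∑_{n ≤ N} v_n exists, and suppose there is α > 0 such that for every n = (n_1,…,n_d) ∈ ℕ^d and every i, ‖v_{n+e_i} − v_n‖ < α/n_i. Then lim_{l(n)→∞} v_n = v. -/
/-!
Fix a large `M` and, for `n` far out, average over the box `B = (n, n + K]` with `K i = n i / M`:
`v n - w` is the mean over `B` of `(v n - v m) + (v m - w)`. Slow variation bounds the first part
by `α * ∑ i, K i / n i ≤ α d / M`. By inclusion–exclusion, the sum of `v m - w` over `B` is an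
alternating sum of `2 ^ d` sums over boxes `[1, c]` with all `c i` large, each at most
`δ * ∏ i, c i` by the Cesàro hypothesis; as `∏ i, c i ≤ (3 M) ^ d * #B`, the second part is at
most `(6 M) ^ d * δ`.
-/

open Finset

section SlowVariation

variable {ι V : Type*} [DecidableEq ι] [SeminormedAddCommGroup V]

def SlowlyVarying (α : ℝ) (v : (ι → ℕ) → V) : Prop :=
  ∀ n : ι → ℕ, (∀ i, 1 ≤ n i) → ∀ i, ‖v (Function.update n i (n i + 1)) - v n‖ ≤ α / n i

variable {v : (ι → ℕ) → V} {α : ℝ}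

lemma SlowlyVarying.norm_apply_add_single_sub_le (hv : SlowlyVarying α v) (hα : 0 ≤ α)
    {n : ι → ℕ} (hn : ∀ i, 1 ≤ n i) (i : ι) (m : ℕ) :
    ‖v (n + Pi.single i m) - v n‖ ≤ α * (m / n i) := by
  induction m with
  | zero => simp
  | succ m ih =>
    set x := n + Pi.single i m
    have hx : ∀ j, n j ≤ x j := fun j => Nat.le_add_right _ _
    have hstep : n + Pi.single i (m + 1) = Function.update x i (x i + 1) := by
      ext j
      rcases eq_or_ne j i with rfl | hj
      · simp [x, add_assoc]
      · simp [x, hj]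
    have hxi : α / x i ≤ α / n i := by
      gcongr
      · exact_mod_cast hn i
      · exact hx i
    calc ‖v (n + Pi.single i (m + 1)) - v n‖
        ≤ ‖v (Function.update x i (x i + 1)) - v x‖ + ‖v x - v n‖ := by
          rw [hstep]
          exact norm_sub_le_norm_sub_add_norm_sub _ _ _
      _ ≤ α / n i + α * (m / n i) :=
          add_le_add ((hv x (fun j => (hn j).trans (hx j)) i).trans hxi) ih
      _ = α * ((m + 1 : ℕ) / n i) := by push_cast; ring

lemma SlowlyVarying.norm_apply_add_sub_le [Fintype ι] (hv : SlowlyVarying α v) (hα : 0 ≤ α)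
    (k : ι → ℕ) {n : ι → ℕ} (hn : ∀ i, 1 ≤ n i) :
    ‖v (n + k) - v n‖ ≤ α * ∑ i, (k i : ℝ) / n i := by
  induction k using Pi.single_induction generalizing n with
  | zero => simp
  | single i m =>
    rw [sum_eq_single i (fun j _ hj => by simp [hj]) (by simp), Pi.single_eq_same]
    exact hv.norm_apply_add_single_sub_le hα hn i m
  | add f g hf hg =>
    have hnf : ∀ i, 1 ≤ (n + f) i := fun i => (hn i).trans (Nat.le_add_right _ _)
    calc ‖v (n + (f + g)) - v n‖ ≤ ‖v (n + f + g) - v (n + f)‖ + ‖v (n + f) - v n‖ := by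
          rw [← add_assoc]
          exact norm_sub_le_norm_sub_add_norm_sub _ _ _
      _ ≤ α * ∑ i, (g i : ℝ) / (n + f) i + α * ∑ i, (f i : ℝ) / n i :=
          add_le_add (hg hnf) (hf hn)
      _ ≤ α * ∑ i, (g i : ℝ) / n i + α * ∑ i, (f i : ℝ) / n i := by
          gcongr with i
          · exact_mod_cast hn i
          · exact Nat.le_add_right _ _
      _ = α * ∑ i, ((f + g) i : ℝ) / n i := by
          simp only [Pi.add_apply, Nat.cast_add, add_div, sum_add_distrib]
          ring

end SlowVariation

section Boxes

variable {ι : Type*} [Fintype ι] [DecidableEq ι]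

lemma card_Icc_one_eq_prod (N : ι → ℕ) : #(Icc 1 N) = ∏ i, N i := by
  simp [Pi.card_Icc]

lemma sum_Icc_add_one_eq_sum_powerset {M : Type*} [AddCommGroup M]
    (f : (ι → ℕ) → M) {a b : ι → ℕ} (hab : a ≤ b) :
    ∑ m ∈ Icc (a + 1) b, f m =
      ∑ S ∈ univ.powerset, (-1 : ℤ) ^ #S • ∑ m ∈ Icc 1 (S.piecewise a b), f m := by
  simp_rw [smul_sum]
  -- After swapping the sums, the coefficient of `f m` is `∑ S ⊆ {i | m i ≤ a i}, (-1) ^ #S`,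
  -- which vanishes unless that set is empty.
  rw [sum_comm' (t' := Icc 1 b) (s' := fun m => (univ.filter fun i => m i ≤ a i).powerset)]
  · simp_rw [← sum_smul, sum_powerset_neg_one_pow_card, ite_smul, one_smul, zero_smul,
      ← sum_filter]
    congr 1
    ext m
    simp only [mem_Icc, mem_filter, Pi.le_def, Pi.add_apply, Pi.one_apply, filter_eq_empty_iff]
    grind
  · intro S m
    simp only [mem_powerset, mem_Icc, Pi.le_def, subset_iff, mem_filter, mem_univ, true_and,
      Pi.one_apply, piecewise]
    grind [Pi.le_def]

end Boxes

section Averages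

variable {V : Type*} [SeminormedAddCommGroup V] [NormedSpace ℝ V]

lemma norm_sub_le_of_forall_norm_sub_le {α : Type*} {s : Finset α} (hs : s.Nonempty)
    {x : V} (w : V) (u : α → V) {C : ℝ} (hC : ∀ m ∈ s, ‖x - u m‖ ≤ C) :
    ‖x - w‖ ≤ C + (#s : ℝ)⁻¹ * ‖∑ m ∈ s, (u m - w)‖ := by
  have hcard : (#s : ℝ) ≠ 0 := by exact_mod_cast hs.card_pos.ne'
  have hsplit :
      x - w = (#s : ℝ)⁻¹ • ∑ m ∈ s, (x - u m) + (#s : ℝ)⁻¹ • ∑ m ∈ s, (u m - w) := by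
    rw [← smul_add, ← sum_add_distrib]
    simp only [sub_add_sub_cancel, sum_const, ← Nat.cast_smul_eq_nsmul ℝ, smul_smul,
      inv_mul_cancel₀ hcard, one_smul]
  calc ‖x - w‖ ≤ (#s : ℝ)⁻¹ * ‖∑ m ∈ s, (x - u m)‖ + (#s : ℝ)⁻¹ * ‖∑ m ∈ s, (u m - w)‖ := by
        rw [hsplit]
        refine (norm_add_le _ _).trans_eq ?_
        simp only [norm_smul, norm_inv, RCLike.norm_natCast]
    _ ≤ (#s : ℝ)⁻¹ * (#s * C) + (#s : ℝ)⁻¹ * ‖∑ m ∈ s, (u m - w)‖ := by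
        gcongr
        simpa using norm_sum_le_of_le s hC
    _ = C + (#s : ℝ)⁻¹ * ‖∑ m ∈ s, (u m - w)‖ := by rw [inv_mul_cancel_left₀ hcard]

variable {ι : Type*} [Fintype ι] [DecidableEq ι]

lemma norm_sum_Icc_one_sub_le (v : (ι → ℕ) → V) (w : V) {N : ι → ℕ} {δ : ℝ}
    (hN : ‖((∏ i, N i : ℕ) : ℝ)⁻¹ • ∑ n ∈ Icc 1 N, v n - w‖ ≤ δ) :
    ‖∑ n ∈ Icc 1 N, (v n - w)‖ ≤ (∏ i, N i : ℕ) * δ := by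
  rcases eq_or_ne (∏ i, N i) 0 with h | h
  · have hempty : Icc 1 N = ∅ := card_eq_zero.1 (by rw [card_Icc_one_eq_prod, h])
    simp [hempty, h]
  · have hsum : ∑ n ∈ Icc 1 N, (v n - w) =
        ((∏ i, N i : ℕ) : ℝ) • (((∏ i, N i : ℕ) : ℝ)⁻¹ • ∑ n ∈ Icc 1 N, v n - w) := by
      rw [sum_sub_distrib, sum_const, card_Icc_one_eq_prod, smul_sub, smul_smul,
        mul_inv_cancel₀ (by exact_mod_cast h), one_smul, Nat.cast_smul_eq_nsmul]
    rw [hsum, norm_smul, RCLike.norm_natCast]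
    gcongr

variable {v : (ι → ℕ) → V} {w : V} {L : ℕ} {δ : ℝ}

lemma norm_sum_Icc_add_one_sub_le
    (hL : ∀ N : ι → ℕ, (∀ i, L < N i) →
      ‖((∏ i, N i : ℕ) : ℝ)⁻¹ • ∑ n ∈ Icc 1 N, v n - w‖ ≤ δ)
    {a b : ι → ℕ} (ha : ∀ i, L < a i) (hab : a ≤ b) :
    ‖∑ m ∈ Icc (a + 1) b, (v m - w)‖ ≤ 2 ^ Fintype.card ι * ((∏ i, b i : ℕ) * δ) := by
  have hδ : 0 ≤ δ := (norm_nonneg _).trans (hL (fun _ => L + 1) fun _ => L.lt_succ_self)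
  have hcorner (S : Finset ι) :
      ‖∑ m ∈ Icc 1 (S.piecewise a b), (v m - w)‖ ≤ (∏ i, b i : ℕ) * δ := by
    refine (norm_sum_Icc_one_sub_le v w (hL _ fun i => ?_)).trans ?_
    · exact (ha i).trans_le (S.le_piecewise_of_le_of_le le_rfl hab i)
    · gcongr with i
      exact S.piecewise_le_of_le_of_le hab le_rfl i
  rw [sum_Icc_add_one_eq_sum_powerset _ hab]
  calc ‖∑ S ∈ univ.powerset, (-1 : ℤ) ^ #S • ∑ m ∈ Icc 1 (S.piecewise a b), (v m - w)‖
      ≤ ∑ S ∈ (univ : Finset ι).powerset, ((∏ i, b i : ℕ) * δ) := by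
        refine (norm_sum_le _ _).trans (sum_le_sum fun S _ => ?_)
        rw [norm_zsmul ℝ]
        simpa using hcorner S
    _ = 2 ^ Fintype.card ι * ((∏ i, b i : ℕ) * δ) := by
        rw [sum_const, card_powerset, card_univ, nsmul_eq_mul, Nat.cast_pow, Nat.cast_ofNat]

lemma SlowlyVarying.norm_sub_le_of_box {α : ℝ} (hv : SlowlyVarying α v) (hα : 0 ≤ α)
    (hL : ∀ N : ι → ℕ, (∀ i, L < N i) →
      ‖((∏ i, N i : ℕ) : ℝ)⁻¹ • ∑ n ∈ Icc 1 N, v n - w‖ ≤ δ)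
    {n K : ι → ℕ} (hn : ∀ i, L < n i) (hK : ∀ i, 0 < K i) :
    ‖v n - w‖ ≤ α * ∑ i, (K i : ℝ) / n i +
      2 ^ Fintype.card ι * (((∏ i, (n i + K i) : ℕ) : ℝ) / (∏ i, K i : ℕ)) * δ := by
  have hn1 : ∀ i, 1 ≤ n i := fun i => (hn i).trans_le' (Nat.zero_le L)
  have hcard : #(Icc (n + 1) (n + K)) = ∏ i, K i := by
    simp only [Pi.card_Icc, Pi.add_apply, Pi.one_apply, Nat.card_Icc]
    exact prod_congr rfl fun i _ => by omega
  have hne : (Icc (n + 1) (n + K)).Nonempty :=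
    nonempty_Icc.2 fun i => by simpa [Nat.one_le_iff_ne_zero] using (hK i).ne'
  refine (norm_sub_le_of_forall_norm_sub_le hne w v (C := α * ∑ i, (K i : ℝ) / n i)
    fun m hm => ?_).trans (add_le_add le_rfl ?_)
  · obtain ⟨hnm, hmK⟩ := mem_Icc.1 hm
    have hmn : m = n + (m - n) := by
      ext i
      have := hnm i
      simp only [Pi.add_apply, Pi.one_apply, Pi.sub_apply] at this ⊢
      omega
    rw [norm_sub_rev, hmn]
    refine (hv.norm_apply_add_sub_le hα _ hn1).trans ?_
    gcongr with i
    have := hmK i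
    simp only [Pi.add_apply, Pi.sub_apply] at this ⊢
    omega
  · calc (#(Icc (n + 1) (n + K)) : ℝ)⁻¹ * ‖∑ m ∈ Icc (n + 1) (n + K), (v m - w)‖
        ≤ ((∏ i, K i : ℕ) : ℝ)⁻¹ * (2 ^ Fintype.card ι * ((∏ i, (n i + K i) : ℕ) * δ)) := by
          rw [hcard]
          gcongr
          exact norm_sum_Icc_add_one_sub_le hL hn fun i => Nat.le_add_right _ _
      _ = 2 ^ Fintype.card ι * (((∏ i, (n i + K i) : ℕ) : ℝ) / (∏ i, K i : ℕ)) * δ := by ring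

end Averages

section Arithmetic

lemma add_div_le_three_mul_mul_div {n M : ℕ} (hM : 0 < M) (hn : M ≤ n) :
    n + n / M ≤ 3 * M * (n / M) := by
  have := Nat.lt_div_mul_add (a := n) hM
  have := Nat.div_pos hn hM
  nlinarith

variable {ι : Type*} [Fintype ι]

lemma sum_natCast_div_div_le (M : ℕ) (n : ι → ℕ) :
    ∑ i, ((n i / M : ℕ) : ℝ) / n i ≤ Fintype.card ι / M := by
  calc ∑ i, ((n i / M : ℕ) : ℝ) / n i ≤ ∑ _i : ι, (1 / M : ℝ) := by
        refine sum_le_sum fun i _ => ?_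
        rcases eq_or_ne (n i) 0 with h | h
        · simp [h]
        · calc ((n i / M : ℕ) : ℝ) / n i ≤ ((n i : ℝ) / M) / n i := by
                gcongr
                exact Nat.cast_div_le
            _ = 1 / M := by field_simp
    _ = Fintype.card ι / M := by simp [div_eq_mul_inv]

lemma prod_add_div_div_prod_div_le {M : ℕ} (hM : 0 < M) {n : ι → ℕ} (hn : ∀ i, M ≤ n i) :
    ((∏ i, (n i + n i / M) : ℕ) : ℝ) / (∏ i, n i / M : ℕ) ≤ (3 * M) ^ Fintype.card ι := by
  have hpos : 0 < ∏ i, n i / M := prod_pos fun i _ => Nat.div_pos (hn i) hM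
  rw [div_le_iff₀ (by exact_mod_cast hpos)]
  have : ∏ i, (n i + n i / M) ≤ (3 * M) ^ Fintype.card ι * ∏ i, n i / M :=
    calc ∏ i, (n i + n i / M) ≤ ∏ i, 3 * M * (n i / M) :=
          prod_le_prod' fun i _ => add_div_le_three_mul_mul_div hM (hn i)
      _ = (3 * M) ^ Fintype.card ι * ∏ i, n i / M := by
          rw [prod_mul_distrib, prod_const, card_univ]
  exact_mod_cast this

end Arithmetic

theorem stmt11 {V : Type*} [NormedAddCommGroup V] [NormedSpace ℝ V]
    {d : ℕ} (v : (Fin d → ℕ) → V) (w : V)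
    (hC : ∀ ε > (0:ℝ), ∃ L : ℕ, ∀ N : Fin d → ℕ, (∀ i, L < N i) →
      ‖((∏ i, N i : ℕ) : ℝ)⁻¹ • ∑ n ∈ Finset.Icc 1 N, v n - w‖ < ε)
    (α : ℝ) (hα : 0 < α)
    (hdiff : ∀ n : Fin d → ℕ, (∀ i, 1 ≤ n i) → ∀ i,
      ‖v (Function.update n i (n i + 1)) - v n‖ < α / n i) :
    ∀ ε > (0:ℝ), ∃ L : ℕ, ∀ n : Fin d → ℕ, (∀ i, L < n i) → ‖v n - w‖ < ε := by
  intro ε hε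
  obtain ⟨M, hM⟩ := exists_nat_gt (2 * α * d / ε)
  have hM0 : (0 : ℝ) < M := lt_of_le_of_lt (by positivity) hM
  set δ := ε / (2 * (6 * M) ^ d) with hδ
  obtain ⟨L, hL⟩ := hC δ (by positivity)
  refine ⟨max L M, fun n hn => ?_⟩
  have hMn : ∀ i, M ≤ n i := fun i => ((le_max_right _ _).trans_lt (hn i)).le
  have hMpos : 0 < M := by exact_mod_cast hM0
  have hv : SlowlyVarying α v := fun n hn i => (hdiff n hn i).le
  have hvar : α * (d / M) < ε / 2 := by
    rw [div_lt_iff₀ hε] at hM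
    rw [mul_div_assoc', div_lt_iff₀ hM0]
    linarith
  have hmean : 2 ^ d * (3 * M) ^ d * δ = ε / 2 := by
    rw [hδ, show (6 * M : ℝ) ^ d = 2 ^ d * (3 * M) ^ d by rw [← mul_pow]; ring]
    field_simp
  calc ‖v n - w‖ ≤ α * ∑ i, ((n i / M : ℕ) : ℝ) / n i +
        2 ^ d * (((∏ i, (n i + n i / M) : ℕ) : ℝ) / (∏ i, n i / M : ℕ)) * δ := by
        simpa using hv.norm_sub_le_of_box hα.le (fun N hN => (hL N hN).le)
          (fun i => (le_max_left _ _).trans_lt (hn i)) fun i => Nat.div_pos (hMn i) hMpos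
    _ ≤ α * (d / M) + 2 ^ d * (3 * M) ^ d * δ := by
        gcongr
        · simpa using sum_natCast_div_div_le M n
        · simpa using prod_add_div_div_prod_div_le hMpos hMn
    _ < ε := by linarith
end

section
/- Let (v_n) be a bounded ℕ^d-indexed sequence in a Banach space V, and let (b_k), (β_k) be sequences in (0,∞)^d with 0 < β_k ≤ b_k (componentwise) for all k and l(b_k) → ∞. Then limsup_{k→∞} ‖(1/w(b_k)) ∑_{0 < n ≤ β_k} v_n‖ ≤ limsup_{l(b)→∞} ‖(1/w(b)) ∑_{0 < n ≤ b} v_n‖. -/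
open Filter Topology

theorem stmt13 {V : Type*} [NormedAddCommGroup V] [NormedSpace ℝ V]
    {d : ℕ} (v : (Fin d → ℕ) → V) (C : ℝ) (hC : ∀ n, ‖v n‖ ≤ C)
    (b β : ℕ → (Fin d → ℝ))
    (hβpos : ∀ k i, 0 < β k i) (hβb : ∀ k i, β k i ≤ b k i)
    (hb : Tendsto b atTop atTop) :
    limsup (fun k : ℕ =>
        ‖(∏ i, b k i)⁻¹ • ∑ n ∈ Finset.Icc (1 : Fin d → ℕ) (fun i => ⌊β k i⌋₊), v n‖)
        atTop
      ≤ limsup (fun b' : Fin d → ℝ =>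
        ‖(∏ i, b' i)⁻¹ • ∑ n ∈ Finset.Icc (1 : Fin d → ℕ) (fun i => ⌊b' i⌋₊), v n‖)
        atTop := by
  have hC0 : 0 ≤ C := le_trans (norm_nonneg _) (hC 1)
  set S : (Fin d → ℝ) → V :=
    fun x => ∑ n ∈ Finset.Icc (1 : Fin d → ℕ) (fun i => ⌊x i⌋₊), v n with hS
  set f : (Fin d → ℝ) → ℝ := fun x => ‖(∏ i, x i)⁻¹ • S x‖ with hf
  set g : ℕ → ℝ := fun k => ‖(∏ i, b k i)⁻¹ • S (β k)‖ with hg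
  have hSnorm : ∀ x : Fin d → ℝ, ‖S x‖ ≤ (∏ i, (⌊x i⌋₊ : ℝ)) * C := by
    intro x
    calc ‖S x‖ ≤ ∑ n ∈ Finset.Icc (1 : Fin d → ℕ) (fun i => ⌊x i⌋₊), C :=
          norm_sum_le_of_le _ fun n _ => hC n
    _ = (∏ i, (⌊x i⌋₊ : ℝ)) * C := by
        rw [Finset.sum_const, Pi.card_Icc, nsmul_eq_mul, Nat.cast_prod]
        simp [Nat.card_Icc]
  have hfle : ∀ x, f x ≤ C := by
    intro x
    rcases eq_or_ne (∏ i, x i) 0 with h | h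
    · simp [hf, h, hC0]
    · have h1 : (∏ i, (⌊x i⌋₊ : ℝ)) ≤ ∏ i, |x i| := by
        apply Finset.prod_le_prod (fun i _ => by positivity)
        intro i _
        rcases le_or_gt 0 (x i) with h' | h'
        · exact le_trans (Nat.floor_le h') (le_abs_self _)
        · simp [Nat.floor_of_nonpos h'.le, abs_nonneg]
      have habs : |∏ i, x i| = ∏ i, |x i| := Finset.abs_prod _ _
      have hpos : 0 < |∏ i, x i| := abs_pos.mpr h
      have := hSnorm x
      show ‖(∏ i, x i)⁻¹ • S x‖ ≤ C
      rw [norm_smul, norm_inv, Real.norm_eq_abs]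
      calc |∏ i, x i|⁻¹ * ‖S x‖ ≤ |∏ i, x i|⁻¹ * (|∏ i, x i| * C) := by
            apply mul_le_mul_of_nonneg_left _ (by positivity)
            exact le_trans (hSnorm x)
              (mul_le_mul_of_nonneg_right (habs ▸ h1) hC0)
      _ = C := by field_simp
  have hfbdd : IsBoundedUnder (· ≤ ·) atTop f := isBoundedUnder_of ⟨C, hfle⟩
  have hL0 : (0 : ℝ) ≤ limsup f atTop :=
    le_limsup_of_frequently_le (Frequently.of_forall fun x => norm_nonneg _) hfbdd
  have hgcob : IsCoboundedUnder (· ≤ ·) (atTop : Filter ℕ) g :=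
    isCoboundedUnder_le_of_eventually_le _ (Eventually.of_forall fun k => norm_nonneg _)
  apply le_of_forall_gt_imp_ge_of_dense
  intro a ha
  have ha0 : 0 < a := lt_of_le_of_lt hL0 ha
  have h1 : ∀ᶠ x in atTop, f x < a := eventually_lt_of_limsup_lt ha hfbdd
  rw [eventually_atTop] at h1
  obtain ⟨x₀, hx₀⟩ := h1
  set M : ℝ := 1 + ∑ i, |x₀ i| with hM
  have hM1 : (1 : ℝ) ≤ M := by
    have : (0:ℝ) ≤ ∑ i, |x₀ i| := Finset.sum_nonneg fun i _ => abs_nonneg _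
    linarith
  have hMx : ∀ i, x₀ i ≤ M := by
    intro i
    have h2 : |x₀ i| ≤ ∑ j, |x₀ j| :=
      Finset.single_le_sum (fun j _ => abs_nonneg (x₀ j)) (Finset.mem_univ i)
    have := le_abs_self (x₀ i)
    linarith
  set K : ℝ := max M (C * M / a) with hK
  have hev : ∀ᶠ k in atTop, (fun _ : Fin d => K) ≤ b k := hb.eventually_ge_atTop _
  apply limsup_le_of_le hgcob
  filter_upwards [hev] with k hk
  have hbK : ∀ i, K ≤ b k i := fun i => hk i
  have hbpos : ∀ i, 0 < b k i := fun i =>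
    lt_of_lt_of_le (lt_of_lt_of_le one_pos (hM1.trans (le_max_left _ _))) (hbK i)
  have hprodb : 0 < ∏ i, b k i := Finset.prod_pos fun i _ => hbpos i
  by_cases hcase : ∀ i, M ≤ β k i
  · -- good case : g k ≤ f (β k) < a
    have hβx₀ : x₀ ≤ β k := fun i => (hMx i).trans (hcase i)
    have hfβ : f (β k) < a := hx₀ _ hβx₀
    have hprodβ : 0 < ∏ i, β k i := Finset.prod_pos fun i _ => hβpos k i
    have hle : (∏ i, b k i)⁻¹ ≤ (∏ i, β k i)⁻¹ := by
      apply inv_anti₀ hprodβ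
      exact Finset.prod_le_prod (fun i _ => (hβpos k i).le) fun i _ => hβb k i
    have : g k ≤ f (β k) := by
      show ‖(∏ i, b k i)⁻¹ • S (β k)‖ ≤ ‖(∏ i, β k i)⁻¹ • S (β k)‖
      rw [norm_smul, norm_smul, norm_inv, norm_inv, Real.norm_eq_abs,
        Real.norm_eq_abs, abs_of_pos hprodb, abs_of_pos hprodβ]
      exact mul_le_mul_of_nonneg_right hle (norm_nonneg _)
    exact le_trans this hfβ.le
  · -- bad case : some β k i < M
    push_neg at hcase
    obtain ⟨i, hi⟩ := hcase
    have hflb : ∀ j, (⌊β k j⌋₊ : ℝ) ≤ β k j := fun j => Nat.floor_le (hβpos k j).le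
    have hprodfloor : (∏ j, (⌊β k j⌋₊ : ℝ)) * b k i ≤ M * ∏ j, b k j := by
      rw [← Finset.mul_prod_erase Finset.univ (fun j => ((⌊β k j⌋₊ : ℝ)))
        (Finset.mem_univ i), ← Finset.mul_prod_erase Finset.univ (b k) (Finset.mem_univ i)]
      have h2 : (∏ j ∈ Finset.univ.erase i, (⌊β k j⌋₊ : ℝ)) ≤
          ∏ j ∈ Finset.univ.erase i, b k j :=
        Finset.prod_le_prod (fun j _ => by positivity)
          (fun j _ => (hflb j).trans (hβb k j))
      have h3 : (⌊β k i⌋₊ : ℝ) ≤ M := (hflb i).trans hi.le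
      have h4 : (0:ℝ) ≤ ∏ j ∈ Finset.univ.erase i, (⌊β k j⌋₊ : ℝ) :=
        Finset.prod_nonneg (fun j _ => by positivity)
      calc (⌊β k i⌋₊ : ℝ) * (∏ j ∈ Finset.univ.erase i, (⌊β k j⌋₊ : ℝ)) * b k i
          ≤ M * (∏ j ∈ Finset.univ.erase i, b k j) * b k i := by
            have hb' := (hbpos i).le
            gcongr
      _ = M * (b k i * ∏ j ∈ Finset.univ.erase i, b k j) := by ring
    -- g k ≤ C * M / b k i ≤ a
    have hgle : g k ≤ C * M / b k i := by
      show ‖(∏ i, b k i)⁻¹ • S (β k)‖ ≤ C * M / b k i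
      rw [norm_smul, norm_inv, Real.norm_eq_abs, abs_of_pos hprodb]
      have h5 : (∏ j, b k j)⁻¹ * ‖S (β k)‖ ≤ (∏ j, b k j)⁻¹ * ((∏ j, (⌊β k j⌋₊ : ℝ)) * C) :=
        mul_le_mul_of_nonneg_left (hSnorm (β k)) (by positivity)
      refine h5.trans ?_
      rw [inv_mul_eq_div, div_le_div_iff₀ hprodb (hbpos i)]
      calc (∏ j, (⌊β k j⌋₊ : ℝ)) * C * b k i = (∏ j, (⌊β k j⌋₊ : ℝ)) * b k i * C := by ring
      _ ≤ M * (∏ j, b k j) * C := mul_le_mul_of_nonneg_right hprodfloor hC0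
      _ = C * M * (∏ j, b k j) := by ring
    refine hgle.trans ?_
    rw [div_le_iff₀ (hbpos i)]
    have hKa : C * M / a ≤ b k i := le_trans (le_max_right _ _) (hbK i)
    calc C * M = a * (C * M / a) := by field_simp
    _ ≤ a * b k i := mul_le_mul_of_nonneg_left hKa ha0.le
end

section
/- Let f : ℝ^d → V be a bounded function into a Banach space and L ∈ V such that for each sign pattern s ∈ {+,−}^d, the uniform averages (1/w(b−a)) ∫_a^b f(x) dx converge to L as l(b−a) → ∞ with both a and b lying in the orthant ℝ^d_s. Then (1/w(b−a)) ∫_a^b f(x) dx → L as l(b−a) → ∞ over all a ≤ b in ℝ^d. -/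
/-!
Cut the box `[a, b]` along the coordinate hyperplanes into its intersections with the `2^d`
orthants. Up to null sets these are the boxes `[clip a, clip b]`, where `clip` projects each
coordinate onto the half-line of the orthant; clipping shortens every side. Let `B` bound the
thresholds of all orthants for `ε / 2^d`. A piece all of whose sides exceed `B` contributes at
most `ε / 2^d` times its volume, hence times `w(b - a)`, to `‖∫ (f - L)‖`. A piece whose `i`-th
side is at most `B` has volume at most `B / (b i - a i) · w(b - a)`, so, `f - L` being bounded,
its contribution is small as well once `l(b - a)` is large.
-/

open MeasureTheory Filter Topology

/-- The orthant of `ℝ^d` determined by a sign pattern `s : Fin d → Bool`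
(`true` means the nonnegative half-line, `false` the nonpositive one). -/
def orthant {d : ℕ} (s : Fin d → Bool) : Set (Fin d → ℝ) :=
  {x | ∀ i, if s i then 0 ≤ x i else x i ≤ 0}

open Set

def halfLine : Bool → Set ℝ
  | true => Ici 0
  | false => Iic 0

def projHalfLine : Bool → ℝ → ℝ
  | true => fun t => max t 0
  | false => fun t => min t 0

lemma measurableSet_halfLine (σ : Bool) : MeasurableSet (halfLine σ) := by
  cases σ
  · exact measurableSet_Iic
  · exact measurableSet_Ici

lemma projHalfLine_mem (σ : Bool) (t : ℝ) : projHalfLine σ t ∈ halfLine σ := by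
  cases σ
  · exact min_le_right t 0
  · exact le_max_right t 0

lemma projHalfLine_mono (σ : Bool) : Monotone (projHalfLine σ) := by
  cases σ
  · exact fun _ _ h => min_le_min_right 0 h
  · exact fun _ _ h => max_le_max_right 0 h

lemma projHalfLine_sub_le (σ : Bool) {s t : ℝ} (h : s ≤ t) :
    projHalfLine σ t - projHalfLine σ s ≤ t - s := by
  cases σ
  · exact (le_abs_self _).trans <| (abs_min_sub_min_le_max t 0 s 0).trans <| by
      simp [abs_of_nonneg (sub_nonneg.2 h), h]
  · exact (le_abs_self _).trans <| (abs_max_sub_max_le_abs t s 0).trans_eq <|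
      abs_of_nonneg (sub_nonneg.2 h)

lemma Icc_inter_halfLine_ae_eq (σ : Bool) (s t : ℝ) :
    (Icc s t ∩ halfLine σ : Set ℝ) =ᵐ[volume] Icc (projHalfLine σ s) (projHalfLine σ t) := by
  have hsub : Icc s t ∩ halfLine σ ⊆ Icc (projHalfLine σ s) (projHalfLine σ t) := by
    intro x
    cases σ <;> simp +contextual [halfLine, projHalfLine]
  have hdiff : Icc (projHalfLine σ s) (projHalfLine σ t) \ (Icc s t ∩ halfLine σ) ⊆ {0} := by
    intro x
    cases σ <;> simp [halfLine, projHalfLine] <;> grind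
  rw [ae_eq_set, sdiff_eq_empty.2 hsub]
  exact ⟨measure_empty, measure_mono_null hdiff (measure_singleton 0)⟩

section Orthant

variable {d : ℕ}

def orthantClip (s : Fin d → Bool) (a : Fin d → ℝ) : Fin d → ℝ :=
  fun i => projHalfLine (s i) (a i)

lemma orthant_eq_pi (s : Fin d → Bool) : orthant s = univ.pi fun i => halfLine (s i) := by
  ext x
  simp only [orthant, mem_ofPred_eq, mem_univ_pi]
  refine forall_congr' fun i => ?_
  cases s i <;> rfl

lemma measurableSet_orthant (s : Fin d → Bool) : MeasurableSet (orthant s) := by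
  rw [orthant_eq_pi]
  exact .univ_pi fun i => measurableSet_halfLine (s i)

lemma orthantClip_mem_orthant (s : Fin d → Bool) (a : Fin d → ℝ) :
    orthantClip s a ∈ orthant s := by
  rw [orthant_eq_pi]
  exact fun i _ => projHalfLine_mem (s i) (a i)

lemma orthantClip_mono (s : Fin d → Bool) : Monotone (orthantClip s) :=
  fun _ _ h i => projHalfLine_mono (s i) (h i)

lemma iUnion_orthant : ⋃ s : Fin d → Bool, orthant s = univ := by
  refine eq_univ_of_forall fun x => mem_iUnion.2 ⟨fun i => decide (0 ≤ x i), fun i => ?_⟩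
  by_cases h : 0 ≤ x i <;> simp [h, le_of_not_ge]

lemma pairwise_aedisjoint_orthant :
    Pairwise (Function.onFun (AEDisjoint volume) (orthant (d := d))) := by
  intro s t hst
  obtain ⟨i, hi⟩ := Function.ne_iff.1 hst
  refine measure_mono_null (fun x ⟨hs, ht⟩ => ?_) (Measure.pi_hyperplane _ i 0)
  have hs := hs i
  have ht := ht i
  cases hsi : s i <;> cases hti : t i <;> simp_all [le_antisymm_iff]

lemma Icc_inter_orthant_ae_eq (s : Fin d → Bool) (a b : Fin d → ℝ) :
    (Icc a b ∩ orthant s : Set (Fin d → ℝ)) =ᵐ[volume]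
      Icc (orthantClip s a) (orthantClip s b) := by
  rw [orthant_eq_pi, ← pi_univ_Icc, ← pi_univ_Icc, ← pi_inter_distrib]
  exact Measure.ae_eq_set_pi fun i _ => Icc_inter_halfLine_ae_eq (s i) (a i) (b i)

theorem setIntegral_Icc_eq_sum_orthantClip {E : Type*} [NormedAddCommGroup E] [NormedSpace ℝ E]
    {g : (Fin d → ℝ) → E} {a b : Fin d → ℝ} (hg : IntegrableOn g (Icc a b)) :
    ∫ x in Icc a b, g x = ∑ s, ∫ x in Icc (orthantClip s a) (orthantClip s b), g x := by
  have hcover : ⋃ s, Icc a b ∩ orthant s = Icc a b := by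
    rw [← inter_iUnion, iUnion_orthant, inter_univ]
  calc ∫ x in Icc a b, g x = ∑' s, ∫ x in Icc a b ∩ orthant s, g x := by
        conv_lhs => rw [← hcover]
        exact integral_iUnion_ae
          (fun s => (measurableSet_Icc.inter (measurableSet_orthant s)).nullMeasurableSet)
          (fun s t hst => (pairwise_aedisjoint_orthant hst).mono inter_subset_right
            inter_subset_right) (by rwa [hcover])
    _ = ∑ s, ∫ x in Icc (orthantClip s a) (orthantClip s b), g x := by
        rw [tsum_fintype]
        exact Finset.sum_congr rfl fun s _ =>
          setIntegral_congr_set (Icc_inter_orthant_ae_eq s a b)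

end Orthant

lemma prod_mul_le_mul_prod {ι R : Type*} [Fintype ι] [DecidableEq ι] [CommSemiring R]
    [PartialOrder R] [IsOrderedRing R] {u v : ι → R} (hu : 0 ≤ u) (huv : u ≤ v) (i : ι) :
    (∏ j, u j) * v i ≤ u i * ∏ j, v j := by
  rw [← Finset.mul_prod_erase _ u (Finset.mem_univ i),
    ← Finset.mul_prod_erase _ v (Finset.mem_univ i)]
  have hrest : ∏ j ∈ Finset.univ.erase i, u j ≤ ∏ j ∈ Finset.univ.erase i, v j :=
    Finset.prod_le_prod (fun j _ => hu j) (fun j _ => huv j)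
  have hi : 0 ≤ u i * v i := mul_nonneg (hu i) ((hu i).trans (huv i))
  calc u i * (∏ j ∈ Finset.univ.erase i, u j) * v i
      = u i * v i * ∏ j ∈ Finset.univ.erase i, u j := by ring
    _ ≤ u i * v i * ∏ j ∈ Finset.univ.erase i, v j := mul_le_mul_of_nonneg_left hrest hi
    _ = u i * (v i * ∏ j ∈ Finset.univ.erase i, v j) := by ring

section Box

variable {d : ℕ} {E : Type*} [NormedAddCommGroup E] [NormedSpace ℝ E]

lemma norm_setIntegral_Icc_le {g : (Fin d → ℝ) → E} {C : ℝ} (hC : ∀ x, ‖g x‖ ≤ C)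
    {a b : Fin d → ℝ} (hab : a ≤ b) : ‖∫ x in Icc a b, g x‖ ≤ C * ∏ i, (b i - a i) := by
  have h := norm_setIntegral_le_of_norm_le_const (μ := volume) (s := Icc a b)
    measure_Icc_lt_top fun x _ => hC x
  rwa [measureReal_def, Real.volume_Icc_pi_toReal hab] at h

lemma inv_prod_mul_norm_setIntegral_orthantClip_lt {g : (Fin d → ℝ) → E} {C B ε : ℝ}
    (hε : 0 < ε) (hB : 0 ≤ B) (hC : ∀ x, ‖g x‖ ≤ C) (s : Fin d → Bool)
    (hs : ∀ a b : Fin d → ℝ, a ∈ orthant s → b ∈ orthant s → a ≤ b → (∀ i, B < b i - a i) →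
      ‖(∏ i, (b i - a i))⁻¹ • ∫ x in Icc a b, g x‖ < ε)
    {a b : Fin d → ℝ} (hab : a ≤ b) (hlong : ∀ i, C * B / ε < b i - a i) :
    (∏ i, (b i - a i))⁻¹ * ‖∫ x in Icc (orthantClip s a) (orthantClip s b), g x‖ < ε := by
  set u : Fin d → ℝ := fun i => orthantClip s b i - orthantClip s a i
  set v : Fin d → ℝ := fun i => b i - a i
  have hu : 0 ≤ u := fun i => sub_nonneg.2 (orthantClip_mono s hab i)
  have huv : u ≤ v := fun i => projHalfLine_sub_le (s i) (hab i)
  have hC0 : 0 ≤ C := (norm_nonneg _).trans (hC 0)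
  have hv : ∀ i, 0 < v i := fun i => (by positivity : 0 ≤ C * B / ε).trans_lt (hlong i)
  have hvprod : 0 < ∏ i, v i := Finset.prod_pos fun i _ => hv i
  by_cases hclip : ∀ i, B < u i
  · have huprod : 0 < ∏ i, u i := Finset.prod_pos fun i _ => hB.trans_lt (hclip i)
    have h := hs _ _ (orthantClip_mem_orthant s a) (orthantClip_mem_orthant s b)
      (orthantClip_mono s hab) hclip
    rw [norm_smul_of_nonneg (inv_nonneg.2 huprod.le)] at h
    refine lt_of_le_of_lt (mul_le_mul_of_nonneg_right ?_ (norm_nonneg _)) h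
    exact inv_anti₀ huprod (Finset.prod_le_prod (fun i _ => hu i) fun i _ => huv i)
  · push Not at hclip
    obtain ⟨i, hi⟩ := hclip
    calc (∏ i, v i)⁻¹ * ‖∫ x in Icc (orthantClip s a) (orthantClip s b), g x‖
        ≤ (∏ i, v i)⁻¹ * (C * ∏ i, u i) :=
          mul_le_mul_of_nonneg_left (norm_setIntegral_Icc_le hC (orthantClip_mono s hab))
            (inv_nonneg.2 hvprod.le)
      _ ≤ C * B / v i := by
          have hvol : (∏ i, u i) * v i ≤ B * ∏ i, v i :=
            (prod_mul_le_mul_prod hu huv i).trans (mul_le_mul_of_nonneg_right hi hvprod.le)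
          rw [inv_mul_le_iff₀ hvprod, mul_div_assoc', le_div_iff₀ (hv i)]
          linarith [mul_le_mul_of_nonneg_left hvol hC0]
      _ < ε := by
          rw [div_lt_iff₀ (hv i)]
          exact (div_lt_iff₀' hε).1 (hlong i)

end Box

theorem stmt15_general {V : Type*} [NormedAddCommGroup V] [NormedSpace ℝ V]
    {d : ℕ} (f : (Fin d → ℝ) → V) (hmeas : StronglyMeasurable f)
    (M : ℝ) (hbd : ∀ x, ‖f x‖ ≤ M)
    (L : V)
    (hs : ∀ s : Fin d → Bool, ∀ ε > (0:ℝ), ∃ B : ℝ,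
      ∀ a b : Fin d → ℝ, a ∈ orthant s → b ∈ orthant s → a ≤ b →
        (∀ i, B < b i - a i) →
        ‖(∏ i, (b i - a i))⁻¹ • ∫ x in Set.Icc a b, f x - L‖ < ε) :
    ∀ ε > (0:ℝ), ∃ B : ℝ, ∀ a b : Fin d → ℝ, a ≤ b → (∀ i, B < b i - a i) →
      ‖(∏ i, (b i - a i))⁻¹ • ∫ x in Set.Icc a b, f x - L‖ < ε := by
  intro ε hε
  set N : ℝ := (Fintype.card (Fin d → Bool) : ℝ)
  have hN : 0 < N := by positivity
  choose Bs hBs using fun s => hs s (ε / N) (by positivity)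
  obtain ⟨B, hB, hBsB⟩ : ∃ B, 0 ≤ B ∧ ∀ s, Bs s ≤ B := by
    obtain ⟨B, hB⟩ := Finite.bddAbove_range Bs
    exact ⟨max B 0, le_max_right B 0, fun s => le_max_of_le_left (hB ⟨s, rfl⟩)⟩
  have hC : ∀ x, ‖f x - L‖ ≤ M + ‖L‖ := fun x => (norm_sub_le _ _).trans (by linarith [hbd x])
  refine ⟨(M + ‖L‖) * B / (ε / N), fun a b hab hlong => ?_⟩
  have hint : IntegrableOn (fun x => f x - L) (Icc a b) :=
    Measure.integrableOn_of_bounded measure_Icc_lt_top.ne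
      (hmeas.sub stronglyMeasurable_const).aestronglyMeasurable (.of_forall hC)
  have hw : 0 ≤ (∏ i, (b i - a i))⁻¹ :=
    inv_nonneg.2 (Finset.prod_nonneg fun i _ => sub_nonneg.2 (hab i))
  rw [norm_smul_of_nonneg hw, setIntegral_Icc_eq_sum_orthantClip hint]
  refine (mul_le_mul_of_nonneg_left (norm_sum_le _ _) hw).trans_lt ?_
  calc _ = ∑ s, (∏ i, (b i - a i))⁻¹ *
          ‖∫ x in Icc (orthantClip s a) (orthantClip s b), f x - L‖ := Finset.mul_sum ..
    _ < ∑ _s : Fin d → Bool, ε / N :=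
        Finset.sum_lt_sum_of_nonempty Finset.univ_nonempty fun s _ =>
        inv_prod_mul_norm_setIntegral_orthantClip_lt (by positivity) hB hC s
          (fun a b ha hb hab h => hBs s a b ha hb hab fun i => (hBsB s).trans_lt (h i)) hab hlong
    _ = ε := by
        rw [Finset.sum_const, Finset.card_univ, nsmul_eq_mul]
        exact mul_div_cancel₀ ε hN.ne'

theorem stmt15 {V : Type*} [NormedAddCommGroup V] [NormedSpace ℝ V]
    [CompleteSpace V] [SecondCountableTopology V]
    {d : ℕ} (f : (Fin d → ℝ) → V) (hmeas : StronglyMeasurable f)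
    (M : ℝ) (hbd : ∀ x, ‖f x‖ ≤ M)
    (L : V)
    (hs : ∀ s : Fin d → Bool, ∀ ε > (0:ℝ), ∃ B : ℝ,
      ∀ a b : Fin d → ℝ, a ∈ orthant s → b ∈ orthant s → a ≤ b →
        (∀ i, B < b i - a i) →
        ‖(∏ i, (b i - a i))⁻¹ • ∫ x in Set.Icc a b, f x - L‖ < ε) :
    ∀ ε > (0:ℝ), ∃ B : ℝ, ∀ a b : Fin d → ℝ, a ≤ b → (∀ i, B < b i - a i) →
      ‖(∏ i, (b i - a i))⁻¹ • ∫ x in Set.Icc a b, f x - L‖ < ε :=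
  stmt15_general f hmeas M hbd L hs
end

section
/- Let f : ℝ^d → V be a bounded measurable function into a separable Banach space with the property that lim_{l(b-a)→∞} (1/w(b-a)) ∫_a^b f(x) dx = L ∈ V (over all boxes [a,b] ⊂ ℝ^d with min side length → ∞). Then for every Følner sequence (Φ_N) in ℝ^d, lim_{N→∞} (1/w(Φ_N)) ∫_{Φ_N} f(x) dx = L. -/
/-!
Fix a cube `Q` whose side exceeds the threshold given by the box hypothesis, so that every
translate `x + Q` has average within `ε` of `L`. Averaging over `t ∈ Q`, Fubini writes `⨍_Φ f - L`
as the `Q`-average of `⨍_Φ f - ⨍_Φ f(· + t)` plus the `Φ`-average of `⨍_{x+Q} f - L`. The second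
term is at most `ε`; the first is bounded by `M |Φ △ (Φ + t)| / |Φ|` pointwise in `t`, which tends
to zero along a Følner sequence, so dominated convergence on `Q` kills it.
-/

open MeasureTheory Filter Topology

section

variable {α G E : Type*} [NormedAddCommGroup E] [NormedSpace ℝ E]

section Averages

variable [MeasurableSpace α]

theorem norm_setIntegral_sub_setIntegral_le {μ : Measure α} {f : α → E}
    (hf : AEStronglyMeasurable f μ) {M : ℝ} (hM : ∀ x, ‖f x‖ ≤ M) {s t : Set α}
    (hs : MeasurableSet s) (ht : MeasurableSet t) (hsμ : μ s ≠ ⊤) (htμ : μ t ≠ ⊤) :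
    ‖∫ x in s, f x ∂μ - ∫ x in t, f x ∂μ‖ ≤ M * μ.real (symmDiff s t) := by
  have hfs : IntegrableOn f s μ := .of_bound hsμ.lt_top hf.restrict M (ae_of_all _ hM)
  have hft : IntegrableOn f t μ := .of_bound htμ.lt_top hf.restrict M (ae_of_all _ hM)
  have hst : μ (symmDiff s t) ≠ ⊤ :=
    ne_top_of_le_ne_top (measure_union_ne_top hsμ htμ) (measure_mono Set.symmDiff_subset_union)
  have hpointwise : ∀ x,
      ‖s.indicator f x - t.indicator f x‖ ≤ (symmDiff s t).indicator (fun _ => M) x := by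
    intro x
    by_cases hxs : x ∈ s <;> by_cases hxt : x ∈ t <;> simp [Set.mem_symmDiff, hxs, hxt, hM]
  rw [← integral_indicator hs, ← integral_indicator ht,
    ← integral_sub ((integrable_indicator_iff hs).2 hfs) ((integrable_indicator_iff ht).2 hft),
    mul_comm, ← smul_eq_mul, ← integral_indicator_const _ (hs.symmDiff ht)]
  exact norm_integral_le_of_norm_le
    ((integrable_indicator_iff (hs.symmDiff ht)).2 (integrableOn_const hst))
    (ae_of_all _ hpointwise)

theorem norm_average_le_of_norm_le {ν : Measure α} [IsFiniteMeasure ν] {g : α → E} {M : ℝ}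
    (hM0 : 0 ≤ M) (hg : ∀ x, ‖g x‖ ≤ M) : ‖⨍ x, g x ∂ν‖ ≤ M := by
  rcases eq_zero_or_neZero ν with rfl | _
  · simpa using hM0
  · simpa [average_eq'] using
      norm_integral_le_of_norm_le_const (μ := (ν Set.univ)⁻¹ • ν) (ae_of_all _ hg)

theorem setAverage_sub_eq_inv_smul_setIntegral_sub [CompleteSpace E] {μ : Measure α} {s : Set α}
    (hs0 : μ s ≠ 0) (hsμ : μ s ≠ ⊤) {f : α → E} (hf : IntegrableOn f s μ) (c : E) :
    (⨍ x in s, f x ∂μ) - c = (μ.real s)⁻¹ • ∫ x in s, f x - c ∂μ := by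
  have hs : μ.real s ≠ 0 := ENNReal.toReal_ne_zero.2 ⟨hs0, hsμ⟩
  have := Fact.mk hsμ.lt_top
  rw [integral_sub hf (integrable_const c), setIntegral_const, smul_sub, smul_smul,
    inv_mul_cancel₀ hs, one_smul, setAverage_eq]

end Averages

section Translation

variable [AddGroup G] [MeasurableSpace G] [MeasurableAdd G] {μ : Measure G}
  [μ.IsAddRightInvariant]

theorem measure_image_add_right (t : G) (s : Set G) : μ ((· + t) '' s) = μ s := by
  rw [Set.image_add_right, measure_preimage_add_right]

theorem setAverage_image_add_right (f : G → E) (t : G) (s : Set G) :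
    ⨍ x in (· + t) '' s, f x ∂μ = ⨍ x in s, f (x + t) ∂μ := by
  rw [setAverage_eq, setAverage_eq, measureReal_def, measureReal_def, measure_image_add_right,
    (measurePreserving_add_right μ t).setIntegral_image_emb (measurableEmbedding_addRight t)]

theorem norm_setAverage_sub_setAverage_comp_add_right_le {f : G → E}
    (hf : AEStronglyMeasurable f μ) {M : ℝ} (hM : ∀ x, ‖f x‖ ≤ M) {s : Set G}
    (hs : MeasurableSet s) (hsμ : μ s ≠ ⊤) (t : G) :
    ‖⨍ x in s, f x ∂μ - ⨍ x in s, f (x + t) ∂μ‖ ≤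
      M * (μ (symmDiff s ((· + t) '' s)) / μ s).toReal := by
  have hts : MeasurableSet ((· + t) '' s) := by
    rw [Set.image_add_right]
    exact measurable_add_const _ hs
  have hbound := norm_setIntegral_sub_setIntegral_le hf hM hs hts hsμ
    (by rwa [measure_image_add_right])
  rw [← setAverage_image_add_right, setAverage_eq, setAverage_eq, measureReal_def,
    measureReal_def, measure_image_add_right, ← smul_sub, norm_smul, norm_inv,
    Real.norm_of_nonneg ENNReal.toReal_nonneg, ENNReal.toReal_div, ← measureReal_def,
    ← measureReal_def]
  calc (μ.real s)⁻¹ * ‖∫ x in s, f x ∂μ - ∫ x in (· + t) '' s, f x ∂μ‖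
      ≤ (μ.real s)⁻¹ * (M * μ.real (symmDiff s ((· + t) '' s))) := by gcongr
    _ = M * (μ.real (symmDiff s ((· + t) '' s)) / μ.real s) := by ring

theorem tendsto_setAverage_sub_setAverage_comp_add_right {ι : Type*} {l : Filter ι}
    {f : G → E} (hf : AEStronglyMeasurable f μ) {M : ℝ} (hM : ∀ x, ‖f x‖ ≤ M) {s : ι → Set G}
    (hs : ∀ i, MeasurableSet (s i)) (hsμ : ∀ i, μ (s i) ≠ ⊤) {t : G}
    (ht : Tendsto (fun i => μ (symmDiff (s i) ((· + t) '' s i)) / μ (s i)) l (𝓝 0)) :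
    Tendsto (fun i => ⨍ x in s i, f x ∂μ - ⨍ x in s i, f (x + t) ∂μ) l (𝓝 0) := by
  refine squeeze_zero_norm
    (fun i => norm_setAverage_sub_setAverage_comp_add_right_le hf hM (hs i) (hsμ i) t) ?_
  simpa using ((ENNReal.tendsto_toReal ENNReal.zero_ne_top).comp ht).const_mul M

end Translation

section AveragingOverTranslates

variable [MeasurableSpace G]

theorem norm_average_sub_le_of_forall_norm_average_comp_add_sub_le [CompleteSpace E] [Add G]
    [MeasurableAdd₂ G]
    (ν π : Measure G) [IsFiniteMeasure ν] [NeZero ν] [IsFiniteMeasure π] [NeZero π]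
    {f : G → E} (hf : StronglyMeasurable f) {M : ℝ} (hM : ∀ x, ‖f x‖ ≤ M) {L : E} {δ : ℝ}
    (hδ : ∀ x, ‖⨍ t, f (x + t) ∂π - L‖ ≤ δ) :
    ‖⨍ x, f x ∂ν - L‖ ≤ ‖⨍ t, (⨍ x, f x ∂ν - ⨍ x, f (x + t) ∂ν) ∂π‖ + δ := by
  simp only [average_eq'] at hδ ⊢
  set ν' := (ν Set.univ)⁻¹ • ν
  set π' := (π Set.univ)⁻¹ • π
  have hF : Integrable (Function.uncurry fun t x => f (x + t)) (π'.prod ν') :=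
    .of_bound (hf.comp_measurable (measurable_snd.add measurable_fst)).aestronglyMeasurable M
      (ae_of_all _ fun _ => hM _)
  have hsplit : ∫ x, f x ∂ν' - L = ∫ t, (∫ x, f x ∂ν' - ∫ x, f (x + t) ∂ν') ∂π' +
      ∫ x, (∫ t, f (x + t) ∂π' - L) ∂ν' := by
    have hπ : Integrable (fun t => ∫ x, f (x + t) ∂ν') π' := hF.integral_prod_left
    have hν : Integrable (fun x => ∫ t, f (x + t) ∂π') ν' := hF.integral_prod_right
    rw [integral_sub (integrable_const _) hπ, integral_sub hν (integrable_const _),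
      integral_const, integral_const, integral_integral_swap hF]
    simp
  have hmean : ‖∫ x, (∫ t, f (x + t) ∂π' - L) ∂ν'‖ ≤ δ := by
    simpa using norm_integral_le_of_norm_le_const (μ := ν') (ae_of_all _ hδ)
  rw [hsplit]
  exact (norm_add_le _ _).trans (add_le_add_right hmean _)

theorem tendsto_average_setAverage_sub_setAverage_comp_add_right [AddGroup G] [MeasurableAdd₂ G]
    {μ : Measure G} [μ.IsAddRightInvariant] (π : Measure G) [IsFiniteMeasure π] {f : G → E}
    (hf : StronglyMeasurable f) {M : ℝ} (hM : ∀ x, ‖f x‖ ≤ M) {s : ℕ → Set G}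
    (hs : ∀ N, MeasurableSet (s N)) (hsμ : ∀ N, μ (s N) ≠ ⊤)
    (hfolner : ∀ t, Tendsto (fun N => μ (symmDiff (s N) ((· + t) '' s N)) / μ (s N)) atTop (𝓝 0)) :
    Tendsto (fun N => ⨍ t, (⨍ x in s N, f x ∂μ - ⨍ x in s N, f (x + t) ∂μ) ∂π) atTop (𝓝 0) := by
  have hM0 : 0 ≤ M := (norm_nonneg _).trans (hM 0)
  have hmeas : ∀ N, StronglyMeasurable fun t => ⨍ x in s N, f (x + t) ∂μ := fun N => by
    have := Fact.mk (hsμ N).lt_top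
    simp only [average_eq']
    exact StronglyMeasurable.integral_prod_right (f := fun t x => f (x + t))
      (hf.comp_measurable (measurable_snd.add measurable_fst))
  have hbound : ∀ N t, ‖⨍ x in s N, f x ∂μ - ⨍ x in s N, f (x + t) ∂μ‖ ≤ M + M := fun N t =>
    have := Fact.mk (hsμ N).lt_top
    (norm_sub_le _ _).trans (add_le_add (norm_average_le_of_norm_le hM0 hM)
      (norm_average_le_of_norm_le hM0 fun _ => hM _))
  have hdom := tendsto_integral_of_dominated_convergence (μ := π) (fun _ => M + M)
    (fun N => (stronglyMeasurable_const.sub (hmeas N)).aestronglyMeasurable)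
    (integrable_const _) (fun N => ae_of_all _ (hbound N))
    (ae_of_all _ fun t =>
      tendsto_setAverage_sub_setAverage_comp_add_right hf.aestronglyMeasurable hM hs hsμ
        (hfolner t))
  simp only [average_eq π]
  simpa using hdom.const_smul (π.real Set.univ)⁻¹

end AveragingOverTranslates

/-- The integrand in `hB` is `f x - L`, not `f x`. -/
theorem norm_setAverage_Icc_comp_add_sub_lt [CompleteSpace E] {ι : Type*} [Fintype ι]
    {f : (ι → ℝ) → E} (hf : LocallyIntegrable f) {L : E} {B ε : ℝ}
    (hB : ∀ a b : ι → ℝ, a ≤ b → (∀ i, B < b i - a i) →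
      ‖(∏ i, (b i - a i))⁻¹ • ∫ x in Set.Icc a b, f x - L‖ < ε)
    {R : ℝ} (hR : 0 < R) (hBR : B < R) (x : ι → ℝ) :
    ‖(⨍ t in Set.Icc 0 fun _ => R, f (x + t)) - L‖ < ε := by
  have hle : x ≤ (fun _ => R) + x := le_add_of_nonneg_left fun _ => hR.le
  have htranslate : ⨍ t in Set.Icc 0 (fun _ => R), f (x + t) =
      ⨍ y in Set.Icc x ((fun _ => R) + x), f y := by
    simp_rw [add_comm x]
    rw [← setAverage_image_add_right, Set.image_add_const_Icc, zero_add]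
  have hvol : volume (Set.Icc x ((fun _ => R) + x)) ≠ 0 := by simp [Real.volume_Icc_pi, hR]
  rw [htranslate, setAverage_sub_eq_inv_smul_setIntegral_sub hvol measure_Icc_lt_top.ne
    (hf.integrableOn_isCompact isCompact_Icc), measureReal_def, Real.volume_Icc_pi_toReal hle]
  exact hB x _ hle fun i => by simpa using hBR

end

theorem stmt16_general {V : Type*} [NormedAddCommGroup V] [NormedSpace ℝ V]
    [CompleteSpace V]
    {d : ℕ} (f : (Fin d → ℝ) → V) (hmeas : StronglyMeasurable f)
    (M : ℝ) (hbd : ∀ x, ‖f x‖ ≤ M)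
    (L : V)
    (hbox : ∀ ε > (0:ℝ), ∃ B : ℝ, ∀ a b : Fin d → ℝ, a ≤ b →
      (∀ i, B < b i - a i) →
      ‖(∏ i, (b i - a i))⁻¹ • ∫ x in Set.Icc a b, f x - L‖ < ε)
    (Φ : ℕ → Set (Fin d → ℝ)) (hΦmeas : ∀ N, MeasurableSet (Φ N))
    (hΦpos : ∀ N, 0 < volume (Φ N)) (hΦfin : ∀ N, volume (Φ N) < ⊤)
    (hFolner : ∀ y : Fin d → ℝ,
      Tendsto (fun N => volume (symmDiff (Φ N) ((fun x => x + y) '' Φ N)) / volume (Φ N))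
        atTop (𝓝 0)) :
    Tendsto (fun N => ((volume (Φ N)).toReal)⁻¹ • ∫ x in Φ N, f x) atTop (𝓝 L) := by
  simp_rw [← measureReal_def, ← setAverage_eq]
  rw [Metric.tendsto_nhds]
  intro ε hε
  obtain ⟨B, hB⟩ := hbox (ε / 2) (half_pos hε)
  have hloc : LocallyIntegrable f :=
    (locallyIntegrable_const M).mono hmeas.aestronglyMeasurable
      (ae_of_all _ fun x => (hbd x).trans (le_abs_self M))
  set R := max B 0 + 1
  set Q : Set (Fin d → ℝ) := Set.Icc 0 fun _ => R
  have hR : 0 < R := by positivity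
  have hBR : B < R := (le_max_left B 0).trans_lt (lt_add_one _)
  have : Fact (volume Q < ⊤) := ⟨measure_Icc_lt_top⟩
  have : NeZero (volume Q) := ⟨by simp [Q, Real.volume_Icc_pi, hR]⟩
  have hlim := tendsto_average_setAverage_sub_setAverage_comp_add_right (volume.restrict Q) hmeas
    hbd hΦmeas (fun N => (hΦfin N).ne) hFolner
  filter_upwards [(tendsto_zero_iff_norm_tendsto_zero.1 hlim).eventually_lt_const (half_pos hε)]
    with N hN
  have : Fact (volume (Φ N) < ⊤) := ⟨hΦfin N⟩
  have : NeZero (volume (Φ N)) := ⟨(hΦpos N).ne'⟩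
  rw [dist_eq_norm]
  calc ‖(⨍ x in Φ N, f x) - L‖
      ≤ ‖⨍ t in Q, ((⨍ x in Φ N, f x) - ⨍ x in Φ N, f (x + t))‖ + ε / 2 :=
        norm_average_sub_le_of_forall_norm_average_comp_add_sub_le _ _ hmeas hbd
          fun x => (norm_setAverage_Icc_comp_add_sub_lt hloc hB hR hBR x).le
    _ < ε / 2 + ε / 2 := by gcongr
    _ = ε := add_halves ε

theorem stmt16 {V : Type*} [NormedAddCommGroup V] [NormedSpace ℝ V]
    [CompleteSpace V] [SecondCountableTopology V]
    {d : ℕ} (f : (Fin d → ℝ) → V) (hmeas : StronglyMeasurable f)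
    (M : ℝ) (hbd : ∀ x, ‖f x‖ ≤ M)
    (L : V)
    (hbox : ∀ ε > (0:ℝ), ∃ B : ℝ, ∀ a b : Fin d → ℝ, a ≤ b →
      (∀ i, B < b i - a i) →
      ‖(∏ i, (b i - a i))⁻¹ • ∫ x in Set.Icc a b, f x - L‖ < ε)
    (Φ : ℕ → Set (Fin d → ℝ)) (hΦmeas : ∀ N, MeasurableSet (Φ N))
    (hΦpos : ∀ N, 0 < volume (Φ N)) (hΦfin : ∀ N, volume (Φ N) < ⊤)
    (hFolner : ∀ y : Fin d → ℝ,
      Tendsto (fun N => volume (symmDiff (Φ N) ((fun x => x + y) '' Φ N)) / volume (Φ N))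
        atTop (𝓝 0)) :
    Tendsto (fun N => ((volume (Φ N)).toReal)⁻¹ • ∫ x in Φ N, f x) atTop (𝓝 L) :=
  stmt16_general f hmeas M hbd L hbox Φ hΦmeas hΦpos hΦfin hFolner
end

section
/- Let S be a measurable subset of [0,∞), and for each t ∈ [0,1] let S_t = {n ∈ ℕ : t + n ∈ S}. If the density D(S_t) = lim_{N→∞} (1/N) |S_t ∩ [1,N]| exists for almost every t ∈ [0,1], then the density D(S) = lim_{b→∞} (1/b) λ(S ∩ [0,b]) exists and equals ∫_0^1 D(S_t) dt. -/
open MeasureTheory Filter Topology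

/-!
Integrating the Cesàro averages `N⁻¹ ∑_{n=1}^N 1_S(t + n)` over `t ∈ [0, 1]` gives exactly
`N⁻¹ λ(S ∩ [1, N + 1])`, since the translates `[n, n + 1]` tile `[1, N + 1]`. The averages are
bounded by `1`, so bounded convergence turns their a.e. convergence to `D t` into convergence of
`N⁻¹ λ(S ∩ [0, N + 1])` to `∫₀¹ D`. As `b ↦ λ(S ∩ [0, b])` is monotone, the limit along the
integers extends to real `b → ∞` by squeezing `b` between `⌊b⌋` and `⌊b⌋ + 1`.
-/

theorem tendsto_inv_mul_of_monotone {F : ℝ → ℝ} {L : ℝ} (hF : Monotone F)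
    (hF₀ : ∀ x, 0 ≤ F x)
    (h : Tendsto (fun N : ℕ => (N : ℝ)⁻¹ * F (N + 1)) atTop (𝓝 L)) :
    Tendsto (fun b => b⁻¹ * F b) atTop (𝓝 L) := by
  have h_lower : Tendsto (fun N : ℕ => ((N : ℝ) + 1)⁻¹ * F N) atTop (𝓝 L) := by
    rw [← tendsto_add_atTop_iff_nat 1]
    have := (tendsto_natCast_div_add_atTop (2 : ℝ)).mul h
    rw [one_mul] at this
    refine this.congr' ?_
    filter_upwards [eventually_ge_atTop 1] with N hN
    have : (N : ℝ) ≠ 0 := by positivity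
    push_cast
    field_simp
    ring
  refine tendsto_of_tendsto_of_tendsto_of_le_of_le' (h_lower.comp tendsto_nat_floor_atTop)
    (h.comp tendsto_nat_floor_atTop) ?_ ?_
  · filter_upwards [eventually_gt_atTop 0] with b hb
    exact mul_le_mul (inv_anti₀ hb (Nat.lt_floor_add_one b).le) (hF (Nat.floor_le hb.le))
      (hF₀ _) (by positivity)
  · filter_upwards [eventually_ge_atTop 1] with b hb
    have hN : (0 : ℝ) < ⌊b⌋₊ := by exact_mod_cast Nat.floor_pos.mpr hb
    exact mul_le_mul (inv_anti₀ hN (Nat.floor_le (by linarith)))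
      (hF (Nat.lt_floor_add_one b).le) (hF₀ _) (by positivity)

theorem norm_inv_smul_sum_Icc_le {E : Type*} [SeminormedAddCommGroup E] [NormedSpace ℝ E]
    {g : ℕ → E} {C : ℝ} (hg : ∀ n, ‖g n‖ ≤ C) (N : ℕ) :
    ‖(N : ℝ)⁻¹ • ∑ n ∈ Finset.Icc 1 N, g n‖ ≤ C := by
  have hsum : ‖∑ n ∈ Finset.Icc 1 N, g n‖ ≤ N * C := by
    simpa using norm_sum_le_of_le (Finset.Icc 1 N) fun n _ => hg n
  rw [norm_smul, norm_inv, Real.norm_natCast]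
  rcases N.eq_zero_or_pos with rfl | hN
  · simpa using (norm_nonneg _).trans (hg 0)
  · rwa [inv_mul_le_iff₀ (by exact_mod_cast hN)]

theorem setIntegral_Icc_sum_comp_add_nat {f : ℝ → ℝ} (hf : LocallyIntegrable f) (N : ℕ) :
    ∫ t in Set.Icc (0 : ℝ) 1, ∑ n ∈ Finset.Icc 1 N, f (t + n) =
      ∫ x in (1 : ℝ)..N + 1, f x := by
  have hf' : ∀ a b : ℝ, IntervalIntegrable f volume a b := fun _ _ =>
    (hf.integrableOn_isCompact isCompact_uIcc).intervalIntegrable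
  rw [integral_Icc_eq_integral_Ioc, ← intervalIntegral.integral_of_le zero_le_one,
    intervalIntegral.integral_finsetSum fun n _ => by
      simpa using (hf' n (1 + n)).comp_add_right (n : ℝ)]
  simp_rw [intervalIntegral.integral_comp_add_right, zero_add, add_comm (1 : ℝ)]
  rw [← Finset.Ico_add_one_right_eq_Icc]
  exact_mod_cast intervalIntegral.sum_integral_adjacent_intervals_Ico
    (a := fun n : ℕ => (n : ℝ)) (Nat.le_add_left 1 N) fun _ _ => hf' _ _

theorem tendsto_inv_mul_intervalIntegral_of_ae_tendsto_average {f : ℝ → ℝ}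
    (hf : Measurable f) {C : ℝ} (hC : ∀ x, ‖f x‖ ≤ C) {D : ℝ → ℝ}
    (hD : ∀ᵐ t ∂(volume.restrict (Set.Icc (0 : ℝ) 1)),
      Tendsto (fun N : ℕ => (N : ℝ)⁻¹ * ∑ n ∈ Finset.Icc 1 N, f (t + n)) atTop (𝓝 (D t))) :
    Tendsto (fun N : ℕ => (N : ℝ)⁻¹ * ∫ x in (1 : ℝ)..N + 1, f x) atTop
      (𝓝 (∫ t in Set.Icc (0 : ℝ) 1, D t)) := by
  have hf_loc : LocallyIntegrable f :=
    (locallyIntegrable_const C).mono hf.aestronglyMeasurable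
      (ae_of_all _ fun x => (hC x).trans (le_abs_self C))
  refine (tendsto_integral_of_dominated_convergence (fun _ => C) (fun N => ?_)
    (integrable_const C) (fun N => ae_of_all _ fun _ => norm_inv_smul_sum_Icc_le (fun _ => hC _) N)
    hD).congr fun N => ?_
  · exact ((Finset.measurable_sum _ fun n _ => hf.comp (measurable_add_const _)).const_mul
      _).aestronglyMeasurable
  · rw [integral_smul, smul_eq_mul, setIntegral_Icc_sum_comp_add_nat hf_loc]

theorem measureReal_inter_Icc_eq_intervalIntegral {S : Set ℝ} (hS : MeasurableSet S) {a b : ℝ}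
    (hab : a ≤ b) :
    volume.real (S ∩ Set.Icc a b) = ∫ x in a..b, S.indicator (fun _ => (1 : ℝ)) x := by
  rw [intervalIntegral.integral_of_le hab, ← integral_Icc_eq_integral_Ioc,
    integral_indicator_const _ hS, smul_eq_mul, mul_one, measureReal_restrict_apply hS]

theorem stmt18 (S : Set ℝ) (hS : MeasurableSet S)
    (D : ℝ → ℝ)
    (hD : ∀ᵐ t ∂(volume.restrict (Set.Icc (0:ℝ) 1)),
      Tendsto (fun N : ℕ =>
          (N : ℝ)⁻¹ * ∑ n ∈ Finset.Icc 1 N, S.indicator (fun _ => (1:ℝ)) (t + n))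
        atTop (𝓝 (D t))) :
    Tendsto (fun b : ℝ => b⁻¹ * (volume (S ∩ Set.Icc 0 b)).toReal) atTop
      (𝓝 (∫ t in Set.Icc (0:ℝ) 1, D t)) := by
  set f := S.indicator fun _ : ℝ => (1 : ℝ)
  have hf_loc : LocallyIntegrable f := (locallyIntegrable_const 1).indicator hS
  have hf_int (a b : ℝ) : IntervalIntegrable f volume a b :=
    (hf_loc.integrableOn_isCompact isCompact_uIcc).intervalIntegrable
  have h_mean := tendsto_inv_mul_intervalIntegral_of_ae_tendsto_average
    (measurable_const.indicator hS)
    (fun x => norm_indicator_le_norm_self _ x |>.trans norm_one.le) hD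
  have h_split : ∀ N : ℕ, volume.real (S ∩ Set.Icc 0 ((N : ℝ) + 1))
      = volume.real (S ∩ Set.Icc 0 1) + ∫ x in (1 : ℝ)..N + 1, f x := fun N => by
    rw [measureReal_inter_Icc_eq_intervalIntegral hS zero_le_one,
      measureReal_inter_Icc_eq_intervalIntegral hS (by positivity),
      intervalIntegral.integral_add_adjacent_intervals (hf_int 0 1) (hf_int 1 _)]
  refine tendsto_inv_mul_of_monotone (F := fun b => volume.real (S ∩ Set.Icc 0 b))
    (fun _ _ hab => measureReal_mono
      (Set.inter_subset_inter_right _ (Set.Icc_subset_Icc_right hab))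
      (measure_inter_lt_top_of_right_ne_top measure_Icc_lt_top.ne).ne)
    (fun _ => measureReal_nonneg) ?_
  have h_zero := (tendsto_inv_atTop_nhds_zero_nat (𝕜 := ℝ)).mul_const
    (volume.real (S ∩ Set.Icc 0 1))
  simpa [h_split, mul_add] using h_zero.add h_mean
end
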